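/- arXiv:1309.5787 — 10 statements merged into one kernel-verified Lean document; each statement's English description precedes it below -/
import Mathlib

section
/- A bipartite graph B is chordal bipartite (i.e., has no induced cycle C_{2k} for any k ≥ 3) and its bipartite complement mir(B) is chordal bipartite if and only if B has no induced subgraph isomorphic to 3K_2, C_6, or C_8. -/
namespace ACB

variable {X Y : Type*}

/-- Neighborhood (in Y) of a vertex x of the bipartite graph with edge relation E. -/
def Nb (E : X → Y → Prop) (x : X) : Set Y := {y | E x y}

/-- Neighborhood (in X) of a vertex y. -/
def NbY (E : X → Y → Prop) (y : Y) : Set X := {x | E x y}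

/-- Mirror (bipartite complement). -/
def Mir (E : X → Y → Prop) : X → Y → Prop := fun x y => ¬ E x y

/-- B contains an induced 3K₂: three disjoint edges with no other edges among the six vertices. -/
def Has3K2 (E : X → Y → Prop) : Prop :=
  ∃ (x : Fin 3 → X) (y : Fin 3 → Y), Function.Injective x ∧ Function.Injective y ∧
    ∀ i j, E (x i) (y j) ↔ i = j

/-- B contains an induced 2K₂. -/
def Has2K2 (E : X → Y → Prop) : Prop :=
  ∃ (x : Fin 2 → X) (y : Fin 2 → Y), Function.Injective x ∧ Function.Injective y ∧
    ∀ i j, E (x i) (y j) ↔ i = j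

/-- B contains an induced chordless cycle C_{2k} (k vertices in each class). -/
def HasCycle (E : X → Y → Prop) (k : ℕ) : Prop :=
  ∃ (x : Fin k → X) (y : Fin k → Y), Function.Injective x ∧ Function.Injective y ∧
    ∀ i j, E (x i) (y j) ↔ (j.val = i.val ∨ j.val = (i.val + 1) % k)

/-- B is chordal bipartite: no induced cycle of length ≥ 6. -/
def ChordalBip (E : X → Y → Prop) : Prop := ∀ k, 3 ≤ k → ¬ HasCycle E k

/-- B is an ACB graph: no induced 3K₂, C₆ or C₈. -/
def ACBGraph (E : X → Y → Prop) : Prop :=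
  ¬ Has3K2 E ∧ ¬ HasCycle E 3 ∧ ¬ HasCycle E 4

/-- A finset of X whose neighborhoods are pairwise incomparable. -/
def XAntichain (E : X → Y → Prop) (S : Finset X) : Prop :=
  (S : Set X).Pairwise fun a b => ¬ Nb E a ⊆ Nb E b

def YAntichain (E : X → Y → Prop) (S : Finset Y) : Prop :=
  (S : Set Y).Pairwise fun a b => ¬ NbY E a ⊆ NbY E b

/-- X-Dilworth number ∇_B(X). -/
noncomputable def dilwX [Fintype X] (E : X → Y → Prop) : ℕ :=
  sSup {n | ∃ S : Finset X, XAntichain E S ∧ S.card = n}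

/-- Y-Dilworth number ∇_B(Y). -/
noncomputable def dilwY [Fintype Y] (E : X → Y → Prop) : ℕ :=
  sSup {n | ∃ S : Finset Y, YAntichain E S ∧ S.card = n}

/-- Bipartite Dilworth number. -/
noncomputable def bipDilw [Fintype X] [Fintype Y] (E : X → Y → Prop) : ℕ :=
  max (dilwX E) (dilwY E)

/-- The graph D_k (1-indexed vertices x_{i+1}, y_{j+1} for i j : Fin (3k-4)):
x_I y_J an edge iff |I-J| ≤ k-2 and {I,J} ∩ {k-1,…,2k-2} ≠ ∅. -/
def Drel (k : ℕ) (i j : Fin (3*k-4)) : Prop :=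
  i.val ≤ j.val + (k-2) ∧ j.val ≤ i.val + (k-2) ∧
    ((k-1 ≤ i.val+1 ∧ i.val+1 ≤ 2*k-2) ∨ (k-1 ≤ j.val+1 ∧ j.val+1 ≤ 2*k-2))

/-- The graph B_k: x_I adjacent to y_J iff I ≤ J ≤ I+k-2 (1-indexed). -/
def Brel (k : ℕ) (i : Fin k) (j : Fin (2*k-2)) : Prop :=
  i.val ≤ j.val ∧ j.val ≤ i.val + (k-2)

/-- split_X(B): complete the first color class to a clique. -/
def splitA (E : X → Y → Prop) : SimpleGraph (X ⊕ Y) :=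
  SimpleGraph.fromRel fun a b => match a, b with
    | Sum.inl _, Sum.inl _ => True
    | Sum.inl x, Sum.inr y => E x y
    | _, _ => False

/-- split_Y(B): complete the second color class to a clique. -/
def splitB (E : X → Y → Prop) : SimpleGraph (X ⊕ Y) :=
  SimpleGraph.fromRel fun a b => match a, b with
    | Sum.inr _, Sum.inr _ => True
    | Sum.inl x, Sum.inr y => E x y
    | _, _ => False

/-- bip(G) for a graph on X ⊕ Y: keep only the cross edges, as a bipartite edge relation. -/
def bipRel (G : SimpleGraph (X ⊕ Y)) : X → Y → Prop :=
  fun x y => G.Adj (Sum.inl x) (Sum.inr y)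

lemma flip_iff {p q r : Prop} (h : ¬p ↔ q) (h2 : ¬q ↔ r) : p ↔ r := by tauto

lemma has3K2_of_cycle_big {E : X → Y → Prop} {k : ℕ} (hk : 5 ≤ k)
    (h : HasCycle E k) : Has3K2 E := by
  obtain ⟨x, y, hx, hy, hE⟩ := h
  refine ⟨![x ⟨0, by omega⟩, x ⟨2, by omega⟩, x ⟨3, by omega⟩],
          ![y ⟨0, by omega⟩, y ⟨2, by omega⟩, y ⟨4, by omega⟩], ?_, ?_, ?_⟩
  · intro i j hij
    fin_cases i <;> fin_cases j <;> simp_all <;>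
      · exact absurd (congrArg Fin.val (hx hij)) (by simp)
  · intro i j hij
    fin_cases i <;> fin_cases j <;> simp_all <;>
      · exact absurd (congrArg Fin.val (hy hij)) (by simp)
  · have h1 : (0 + 1) % k = 1 := Nat.mod_eq_of_lt (by omega)
    have h2 : (2 + 1) % k = 3 := Nat.mod_eq_of_lt (by omega)
    have h3 : (3 + 1) % k = 4 := Nat.mod_eq_of_lt (by omega)
    intro i j
    fin_cases i <;> fin_cases j <;> simp [hE, h1, h2, h3]

lemma mir_cycle3_of_3k2 {E : X → Y → Prop} (h : Has3K2 E) :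
    HasCycle (Mir E) 3 := by
  obtain ⟨x, y, hx, hy, hE⟩ := h
  refine ⟨x, ![y 1, y 2, y 0], hx, ?_, ?_⟩
  · intro i j hij
    fin_cases i <;> fin_cases j <;> simp_all <;>
      · exact absurd (hy hij) (by decide)
  · intro i j
    fin_cases i <;> fin_cases j <;> simp [Mir, hE]

lemma has3k2_of_mir_cycle3 {E : X → Y → Prop} (h : HasCycle (Mir E) 3) :
    Has3K2 E := by
  obtain ⟨x, y, hx, hy, hE⟩ := h
  refine ⟨x, ![y 2, y 0, y 1], hx, ?_, ?_⟩
  · intro i j hij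
    fin_cases i <;> fin_cases j <;> simp_all <;>
      · exact absurd (hy hij) (by decide)
  · intro i j
    fin_cases i <;> fin_cases j <;> exact flip_iff (hE _ _) (by decide)

lemma cycle3_of_mir_3k2 {E : X → Y → Prop} (h : Has3K2 (Mir E)) :
    HasCycle E 3 := by
  obtain ⟨x, y, hx, hy, hE⟩ := h
  refine ⟨x, ![y 1, y 2, y 0], hx, ?_, ?_⟩
  · intro i j hij
    fin_cases i <;> fin_cases j <;> simp_all <;>
      · exact absurd (hy hij) (by decide)
  · intro i j
    fin_cases i <;> fin_cases j <;> exact flip_iff (hE _ _) (by decide)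

lemma cycle4_of_mir_cycle4 {E : X → Y → Prop} (h : HasCycle (Mir E) 4) :
    HasCycle E 4 := by
  obtain ⟨x, y, hx, hy, hE⟩ := h
  refine ⟨x, ![y 2, y 3, y 0, y 1], hx, ?_, ?_⟩
  · intro i j hij
    fin_cases i <;> fin_cases j <;> simp_all <;>
      · exact absurd (hy hij) (by decide)
  · intro i j
    fin_cases i <;> fin_cases j <;> exact flip_iff (hE _ _) (by decide)

/-- B and mir(B) are chordal bipartite iff B has no induced 3K₂, C₆ or C₈. -/
theorem stmt0 {X Y : Type*} (E : X → Y → Prop) :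
    (ChordalBip E ∧ ChordalBip (Mir E)) ↔
      (¬ Has3K2 E ∧ ¬ HasCycle E 3 ∧ ¬ HasCycle E 4) := by
  constructor
  · rintro ⟨hB, hM⟩
    refine ⟨fun h3 => hM 3 (by norm_num) (mir_cycle3_of_3k2 h3),
      hB 3 (by norm_num), hB 4 (by norm_num)⟩
  · rintro ⟨h3k2, hc6, hc8⟩
    constructor
    · intro k hk hcyc
      rcases Nat.lt_or_ge k 5 with h5 | h5
      · interval_cases k
        · exact hc6 hcyc
        · exact hc8 hcyc
      · exact h3k2 (has3K2_of_cycle_big h5 hcyc)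
    · intro k hk hcyc
      rcases Nat.lt_or_ge k 5 with h5 | h5
      · interval_cases k
        · exact h3k2 (has3k2_of_mir_cycle3 hcyc)
        · exact hc8 (cycle4_of_mir_cycle4 hcyc)
      · exact hc6 (cycle3_of_mir_3k2 (has3K2_of_cycle_big h5 hcyc))
end ACB
end

section
/- A bipartite graph B is an ACB graph if and only if B is chordal bipartite and contains no induced 3K_2. -/
namespace ACB

variable {X Y : Type*}

lemma mirC3_of_3K2 (E : X → Y → Prop) (h : Has3K2 E) : HasCycle (Mir E) 3 := by
  obtain ⟨x, y, hx, hy, h⟩ := h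
  refine ⟨fun i => x (i + 2), y, fun a b hab => by
    have := hx hab; exact add_right_cancel this, hy, ?_⟩
  intro i j
  show ¬ E (x (i + 2)) (y j) ↔ _
  rw [h]
  revert i j; decide

lemma threeK2_of_mirC3 (E : X → Y → Prop) (h : HasCycle (Mir E) 3) : Has3K2 E := by
  obtain ⟨x, y, hx, hy, h⟩ := h
  refine ⟨fun i => x (i + 1), y, fun a b hab => by
    have := hx hab; exact add_right_cancel this, hy, ?_⟩
  intro i j
  have h2 : ¬ E (x (i + 1)) (y j) ↔
      ((j : ℕ) = ((i + 1 : Fin 3) : ℕ) ∨ (j : ℕ) = (((i + 1 : Fin 3) : ℕ) + 1) % 3) :=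
    h (i + 1) j
  have h3 := not_iff_not.mpr h2
  rw [not_not] at h3
  rw [h3]
  clear h2 h3
  revert i j; decide

lemma C4_of_mirC4 (E : X → Y → Prop) (h : HasCycle (Mir E) 4) : HasCycle E 4 := by
  obtain ⟨x, y, hx, hy, h⟩ := h
  refine ⟨fun i => x (i + 2), y, fun a b hab => by
    have := hx hab; exact add_right_cancel this, hy, ?_⟩
  intro i j
  have h2 : ¬ E (x (i + 2)) (y j) ↔
      ((j : ℕ) = ((i + 2 : Fin 4) : ℕ) ∨ (j : ℕ) = (((i + 2 : Fin 4) : ℕ) + 1) % 4) :=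
    h (i + 2) j
  have h3 := not_iff_not.mpr h2
  rw [not_not] at h3
  rw [h3]
  clear h2 h3
  revert i j; decide

lemma C3_of_mir3K2 (E : X → Y → Prop) (h : Has3K2 (Mir E)) : HasCycle E 3 := by
  obtain ⟨x, y, hx, hy, h⟩ := h
  refine ⟨fun i => x (i + 2), y, fun a b hab => by
    have := hx hab; exact add_right_cancel this, hy, ?_⟩
  intro i j
  have h2 : ¬ E (x (i + 2)) (y j) ↔ (i + 2 = j) := h (i + 2) j
  have h3 := not_iff_not.mpr h2
  rw [not_not] at h3
  rw [h3]
  clear h2 h3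
  revert i j; decide

lemma threeK2_of_cycle (E : X → Y → Prop) {k : ℕ} (hk : 5 ≤ k)
    (h : HasCycle E k) : Has3K2 E := by
  obtain ⟨x, y, hx, hy, h⟩ := h
  refine ⟨fun i => x ⟨3 * i.val / 2, by have := i.2; omega⟩,
      fun j => y ⟨2 * j.val, by have := j.2; omega⟩, ?_, ?_, ?_⟩
  · intro i j hij
    have h2 : 3 * i.val / 2 = 3 * j.val / 2 := congrArg Fin.val (hx hij)
    have hi := i.2; have hj := j.2
    exact Fin.ext (by omega)
  · intro i j hij
    have h2 : 2 * i.val = 2 * j.val := congrArg Fin.val (hy hij)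
    exact Fin.ext (by omega)
  · intro i j
    rw [h]
    have hi := i.2; have hj := j.2
    have hm : (3 * i.val / 2 + 1) % k = 3 * i.val / 2 + 1 := Nat.mod_eq_of_lt (by omega)
    show (2 * j.val = 3 * i.val / 2 ∨ 2 * j.val = (3 * i.val / 2 + 1) % k) ↔ i = j
    rw [hm, Fin.ext_iff]
    omega

/-- B is ACB (B and mir(B) chordal bipartite) iff B is chordal bipartite and 3K₂-free. -/
theorem stmt1 {X Y : Type*} (E : X → Y → Prop) :
    (ChordalBip E ∧ ChordalBip (Mir E)) ↔ (ChordalBip E ∧ ¬ Has3K2 E) := by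
  constructor
  · rintro ⟨hE, hM⟩
    exact ⟨hE, fun h3 => hM 3 le_rfl (mirC3_of_3K2 E h3)⟩
  · rintro ⟨hE, h3⟩
    refine ⟨hE, ?_⟩
    intro k hk hc
    rcases Nat.lt_or_ge k 5 with h5 | h5
    · interval_cases k
      · exact h3 (threeK2_of_mirC3 E hc)
      · exact hE 4 (by omega) (C4_of_mirC4 E hc)
    · exact hE 3 (by omega) (C3_of_mir3K2 E (threeK2_of_cycle (Mir E) h5 hc))
end ACB
end

section
/- A graph G is a split graph (vertex set partitions into a clique and an independent set) if and only if G has no induced subgraph isomorphic to 2K_2, C_4, or C_5. -/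
namespace ACB

variable {X Y : Type*}

/-- The graph 2K₂ on four vertices. -/
def twoK2 : SimpleGraph (Fin 4) :=
  SimpleGraph.fromRel fun a b => (a = 0 ∧ b = 1) ∨ (a = 2 ∧ b = 3)


section AuxACB
open Finset SimpleGraph

variable {V : Type*} {G : SimpleGraph V}

lemma aux_twoK2_adj (i j : Fin 4) :
    twoK2.Adj i j ↔ (i = 0 ∧ j = 1) ∨ (i = 1 ∧ j = 0) ∨ (i = 2 ∧ j = 3) ∨ (i = 3 ∧ j = 2) := by
  fin_cases i <;> fin_cases j <;> simp [twoK2, SimpleGraph.fromRel_adj]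

lemma aux_embed {n : ℕ} (H : SimpleGraph (Fin n)) (f : Fin n → V)
    (hinj : Function.Injective f)
    (hadj : ∀ i j, H.Adj i j ↔ G.Adj (f i) (f j)) : Nonempty (H ↪g G) :=
  ⟨⟨⟨f, hinj⟩, fun {a b} => (hadj a b).symm⟩⟩

lemma aux_2K2 (a b c d : V) (hab : G.Adj a b) (hcd : G.Adj c d)
    (hac : ¬G.Adj a c) (had : ¬G.Adj a d) (hbc : ¬G.Adj b c) (hbd : ¬G.Adj b d)
    (nac : a ≠ c) (nad : a ≠ d) (nbc : b ≠ c) (nbd : b ≠ d) :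
    Nonempty (twoK2 ↪g G) := by
  have hba := hab.symm; have hdc := hcd.symm
  have hca : ¬G.Adj c a := fun h => hac h.symm
  have hda : ¬G.Adj d a := fun h => had h.symm
  have hcb : ¬G.Adj c b := fun h => hbc h.symm
  have hdb : ¬G.Adj d b := fun h => hbd h.symm
  have nca := nac.symm; have nda := nad.symm; have ncb := nbc.symm; have ndb := nbd.symm
  have nab := hab.ne; have nba := hab.ne'; have ncd := hcd.ne; have ndc := hcd.ne'
  refine aux_embed twoK2 ![a, b, c, d] ?_ ?_
  · intro i j h
    fin_cases i <;> fin_cases j <;> simp_all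
  · intro i j
    fin_cases i <;> fin_cases j <;>
      simp only [aux_twoK2_adj, Matrix.cons_val_zero, Matrix.cons_val_one, Matrix.head_cons,
        Matrix.cons_val_two, Matrix.tail_cons, Matrix.cons_val_three] <;>
      first
        | exact iff_of_true (by decide) (by assumption)
        | exact iff_of_false (by decide) (by first | exact G.irrefl | assumption)

lemma aux_C4 (a b c d : V) (hab : G.Adj a b) (hbc : G.Adj b c) (hcd : G.Adj c d)
    (hda : G.Adj d a) (hac : ¬G.Adj a c) (hbd : ¬G.Adj b d)
    (nac : a ≠ c) (nbd : b ≠ d) :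
    Nonempty (cycleGraph 4 ↪g G) := by
  have hba := hab.symm; have hcb := hbc.symm; have hdc := hcd.symm; have had := hda.symm
  have hca : ¬G.Adj c a := fun h => hac h.symm
  have hdb : ¬G.Adj d b := fun h => hbd h.symm
  have nca := nac.symm; have ndb := nbd.symm
  have nab := hab.ne; have nba := hab.ne'; have nbc := hbc.ne; have ncb := hbc.ne'
  have ncd := hcd.ne; have ndc := hcd.ne'; have nda := hda.ne; have nad := hda.ne'
  refine aux_embed _ ![a, b, c, d] ?_ ?_
  · intro i j h
    fin_cases i <;> fin_cases j <;> simp_all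
  · intro i j
    fin_cases i <;> fin_cases j <;>
      simp only [Matrix.cons_val_zero, Matrix.cons_val_one, Matrix.head_cons,
        Matrix.cons_val_two, Matrix.tail_cons, Matrix.cons_val_three] <;>
      first
        | exact iff_of_true (by decide) (by assumption)
        | exact iff_of_false (by decide) (by first | exact G.irrefl | assumption)

lemma aux_C5 (a b c d e : V) (hab : G.Adj a b) (hbc : G.Adj b c) (hcd : G.Adj c d)
    (hde : G.Adj d e) (hea : G.Adj e a)
    (hac : ¬G.Adj a c) (had : ¬G.Adj a d) (hbd : ¬G.Adj b d) (hbe : ¬G.Adj b e)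
    (hce : ¬G.Adj c e)
    (nac : a ≠ c) (nad : a ≠ d) (nbd : b ≠ d) (nbe : b ≠ e) (nce : c ≠ e) :
    Nonempty (cycleGraph 5 ↪g G) := by
  have hba := hab.symm; have hcb := hbc.symm; have hdc := hcd.symm
  have hed := hde.symm; have hae := hea.symm
  have hca : ¬G.Adj c a := fun h => hac h.symm
  have hda : ¬G.Adj d a := fun h => had h.symm
  have hdb : ¬G.Adj d b := fun h => hbd h.symm
  have heb : ¬G.Adj e b := fun h => hbe h.symm
  have hec : ¬G.Adj e c := fun h => hce h.symm
  have nca := nac.symm; have nda := nad.symm; have ndb := nbd.symm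
  have neb := nbe.symm; have nec := nce.symm
  have nab := hab.ne; have nba := hab.ne'; have nbc := hbc.ne; have ncb := hbc.ne'
  have ncd := hcd.ne; have ndc := hcd.ne'; have nde := hde.ne; have ned := hde.ne'
  have nea := hea.ne; have nae := hea.ne'
  refine aux_embed _ ![a, b, c, d, e] ?_ ?_
  · intro i j h
    fin_cases i <;> fin_cases j <;> simp_all
  · intro i j
    fin_cases i <;> fin_cases j <;>
      simp only [Matrix.cons_val_zero, Matrix.cons_val_one, Matrix.head_cons,
        Matrix.cons_val_two, Matrix.tail_cons, Matrix.cons_val_three, Matrix.cons_val_four,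
        Matrix.cons_val_fin_one, Matrix.cons_val_succ] <;>
      first
        | exact iff_of_true (by decide) (by assumption)
        | exact iff_of_false (by decide) (by first | exact G.irrefl | assumption)



section EcntACB
variable {V : Type*} [DecidableEq V] (G : SimpleGraph V) [DecidableRel G.Adj]

def ecnt (T : Finset V) : ℕ := ∑ u ∈ T, (T.filter (G.Adj u)).card

lemma ecnt_insert {T : Finset V} {v : V} (hv : v ∉ T) :
    ecnt G (insert v T) = ecnt G T + 2 * (T.filter (G.Adj v)).card := by
  unfold ecnt
  rw [Finset.sum_insert hv]
  have h1 : (insert v T).filter (G.Adj v) = T.filter (G.Adj v) := by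
    rw [Finset.filter_insert, if_neg (G.irrefl)]
  rw [h1]
  have h2 : ∀ u ∈ T, ((insert v T).filter (G.Adj u)).card
      = (T.filter (G.Adj u)).card + (if G.Adj u v then 1 else 0) := by
    intro u hu
    rw [Finset.filter_insert]
    split
    · rw [Finset.card_insert_of_notMem (fun h => hv (Finset.mem_of_mem_filter _ h))]
    · simp
  rw [Finset.sum_congr rfl h2, Finset.sum_add_distrib]
  have h3 : (∑ u ∈ T, if G.Adj u v then 1 else 0) = (T.filter (G.Adj v)).card := by
    rw [Finset.card_filter]
    exact Finset.sum_congr rfl fun u _ => by simp only [G.adj_comm]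
  rw [h3]; ring


end EcntACB

section MainACB
variable {V : Type*} {G : SimpleGraph V} [Fintype V] [DecidableEq V] [DecidableRel G.Adj]

lemma aux_key
    (h2 : ¬ Nonempty (twoK2 ↪g G)) (h4 : ¬ Nonempty (cycleGraph 4 ↪g G))
    (h5 : ¬ Nonempty (cycleGraph 5 ↪g G))
    (K : Finset V) (hcl : ∀ a ∈ K, ∀ b ∈ K, a ≠ b → G.Adj a b)
    (hmax : ∀ K' : Finset V, (∀ a ∈ K', ∀ b ∈ K', a ≠ b → G.Adj a b) → K'.card ≤ K.card)
    (hmin : ∀ K' : Finset V, (∀ a ∈ K', ∀ b ∈ K', a ≠ b → G.Adj a b) → K'.card = K.card →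
      ecnt G Kᶜ ≤ ecnt G K'ᶜ)
    (x y : V) (hx : x ∉ K) (hy : y ∉ K) (hxy : G.Adj x y)
    (hsub : ∀ w ∈ K, ¬G.Adj x w → ¬G.Adj y w) : False := by
  have hSx : ∃ w ∈ K, ¬ G.Adj x w := by
    by_contra h
    push_neg at h
    have hcl' : ∀ a ∈ insert x K, ∀ b ∈ insert x K, a ≠ b → G.Adj a b := by
      intro a ha b hb hne
      simp only [Finset.mem_insert] at ha hb
      rcases ha with rfl | ha <;> rcases hb with rfl | hb
      · exact absurd rfl hne
      · exact h b hb
      · exact (h a ha).symm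
      · exact hcl a ha b hb hne
    have := hmax _ hcl'
    rw [Finset.card_insert_of_notMem hx] at this
    omega
  obtain ⟨w, hwK, hwx⟩ := hSx
  have hwy : ¬ G.Adj y w := hsub w hwK hwx
  have hxw : x ≠ w := fun h => hx (h ▸ hwK)
  have hyw : y ≠ w := fun h => hy (h ▸ hwK)
  by_cases hone : ∀ w' ∈ K, w' ≠ w → G.Adj x w'
  · by_cases hball : ∀ b ∈ K, b ≠ w → G.Adj y b
    · have hxyne : x ≠ y := hxy.ne
      have hyE : y ∉ K.erase w := fun h => hy (Finset.mem_of_mem_erase h)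
      have hxE : x ∉ insert y (K.erase w) := by
        simp only [Finset.mem_insert]
        rintro (rfl | h)
        · exact hxyne rfl
        · exact hx (Finset.mem_of_mem_erase h)
      have hcl' : ∀ a ∈ insert x (insert y (K.erase w)), ∀ b ∈ insert x (insert y (K.erase w)),
          a ≠ b → G.Adj a b := by
        intro a ha b hb hne
        simp only [Finset.mem_insert] at ha hb
        rcases ha with rfl | rfl | ha <;> rcases hb with rfl | rfl | hb
        · exact absurd rfl hne
        · exact hxy
        · exact hone b (Finset.mem_of_mem_erase hb) (Finset.ne_of_mem_erase hb)
        · exact hxy.symm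
        · exact absurd rfl hne
        · exact hball b (Finset.mem_of_mem_erase hb) (Finset.ne_of_mem_erase hb)
        · exact (hone a (Finset.mem_of_mem_erase ha) (Finset.ne_of_mem_erase ha)).symm
        · exact (hball a (Finset.mem_of_mem_erase ha) (Finset.ne_of_mem_erase ha)).symm
        · exact hcl a (Finset.mem_of_mem_erase ha) b (Finset.mem_of_mem_erase hb) hne
      have hc := hmax _ hcl'
      rw [Finset.card_insert_of_notMem hxE, Finset.card_insert_of_notMem hyE,
        Finset.card_erase_of_mem hwK] at hc
      have : 1 ≤ K.card := Finset.card_pos.mpr ⟨w, hwK⟩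
      omega
    · push_neg at hball
      obtain ⟨b, hbK, hbw, hby⟩ := hball
      have hbx : G.Adj x b := hone b hbK hbw
      have hxE : x ∉ K.erase w := fun h => hx (Finset.mem_of_mem_erase h)
      have hcl' : ∀ a ∈ insert x (K.erase w), ∀ c ∈ insert x (K.erase w), a ≠ c → G.Adj a c := by
        intro a ha c hc hne
        simp only [Finset.mem_insert] at ha hc
        rcases ha with rfl | ha <;> rcases hc with rfl | hc
        · exact absurd rfl hne
        · exact hone c (Finset.mem_of_mem_erase hc) (Finset.ne_of_mem_erase hc)
        · exact (hone a (Finset.mem_of_mem_erase ha) (Finset.ne_of_mem_erase ha)).symm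
        · exact hcl a (Finset.mem_of_mem_erase ha) c (Finset.mem_of_mem_erase hc) hne
      have hcard' : (insert x (K.erase w)).card = K.card := by
        rw [Finset.card_insert_of_notMem hxE, Finset.card_erase_of_mem hwK]
        have : 1 ≤ K.card := Finset.card_pos.mpr ⟨w, hwK⟩
        omega
      have hmin' := hmin _ hcl' hcard'
      set I₀ := Kᶜ.erase x with hI₀
      have hxI : x ∉ I₀ := Finset.notMem_erase _ _
      have hwI : w ∉ I₀ := fun h =>
        (Finset.mem_compl.mp (Finset.mem_of_mem_erase h)) hwK
      have e1 : Kᶜ = insert x I₀ := (Finset.insert_erase (Finset.mem_compl.mpr hx)).symm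
      have e2 : (insert x (K.erase w))ᶜ = insert w I₀ := by
        rw [Finset.compl_insert, Finset.compl_erase, Finset.erase_insert_of_ne hxw.symm]
      rw [e1, e2, ecnt_insert G hxI, ecnt_insert G hwI] at hmin'
      have hcnt : (I₀.filter (G.Adj x)).card ≤ (I₀.filter (G.Adj w)).card := by omega
      have hyI : y ∈ I₀.filter (G.Adj x) := by
        simp only [hI₀, Finset.mem_filter, Finset.mem_erase, Finset.mem_compl]
        exact ⟨⟨hxy.ne', hy⟩, hxy⟩
      have hz : ∃ z ∈ I₀, G.Adj w z ∧ ¬ G.Adj x z := by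
        by_contra h
        push_neg at h
        have hsub2 : I₀.filter (G.Adj w) ⊆ (I₀.filter (G.Adj x)).erase y := by
          intro z hzm
          rw [Finset.mem_filter] at hzm
          rw [Finset.mem_erase, Finset.mem_filter]
          refine ⟨fun hzy => ?_, hzm.1, h z hzm.1 hzm.2⟩
          exact hwy (hzy ▸ hzm.2).symm
        have hle := Finset.card_le_card hsub2
        rw [Finset.card_erase_of_mem hyI] at hle
        have hpos : 1 ≤ (I₀.filter (G.Adj x)).card := Finset.card_pos.mpr ⟨y, hyI⟩
        omega
      obtain ⟨z, hzI, hwz, hxz⟩ := hz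
      have hzK : z ∉ K := Finset.mem_compl.mp (Finset.mem_of_mem_erase hzI)
      have hzx : z ≠ x := Finset.ne_of_mem_erase hzI
      have hzy : z ≠ y := fun h => hwy (h ▸ hwz).symm
      have hzb : z ≠ b := fun h => hzK (h ▸ hbK)
      have hwb : G.Adj w b := hcl w hwK b hbK (fun h => hbw h.symm)
      by_cases hyz : G.Adj y z
      · by_cases hbz : G.Adj b z
        · exact h4 (aux_C4 x y z b hxy hyz hbz.symm hbx.symm hxz hby
            hzx.symm (fun h => hy (h ▸ hbK)))
        · exact h5 (aux_C5 x y z w b hxy hyz hwz.symm hwb hbx.symm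
            hxz hwx hwy hby (fun h => hbz h.symm)
            hzx.symm hxw hyw (fun h => hy (h ▸ hbK)) hzb)
      · exact h2 (aux_2K2 x y w z hxy hwz hwx hxz hwy hyz hxw hzx.symm hyw hzy.symm)
  · push_neg at hone
    obtain ⟨w', hw'K, hw'w, hw'x⟩ := hone
    have hw'y : ¬ G.Adj y w' := hsub w' hw'K hw'x
    have hww' : G.Adj w w' := hcl w hwK w' hw'K (Ne.symm hw'w)
    exact h2 (aux_2K2 x y w w' hxy hww' hwx hw'x hwy hw'y hxw
      (fun h => hx (h ▸ hw'K)) hyw (fun h => hy (h ▸ hw'K)))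

lemma aux_main
    (h2 : ¬ Nonempty (twoK2 ↪g G)) (h4 : ¬ Nonempty (cycleGraph 4 ↪g G))
    (h5 : ¬ Nonempty (cycleGraph 5 ↪g G))
    (K : Finset V) (hcl : ∀ a ∈ K, ∀ b ∈ K, a ≠ b → G.Adj a b)
    (hmax : ∀ K' : Finset V, (∀ a ∈ K', ∀ b ∈ K', a ≠ b → G.Adj a b) → K'.card ≤ K.card)
    (hmin : ∀ K' : Finset V, (∀ a ∈ K', ∀ b ∈ K', a ≠ b → G.Adj a b) → K'.card = K.card →
      ecnt G Kᶜ ≤ ecnt G K'ᶜ)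
    (x y : V) (hx : x ∉ K) (hy : y ∉ K) (hxy : G.Adj x y) : False := by
  by_cases hs1 : ∀ w ∈ K, ¬G.Adj x w → ¬G.Adj y w
  · exact aux_key h2 h4 h5 K hcl hmax hmin x y hx hy hxy hs1
  by_cases hs2 : ∀ w ∈ K, ¬G.Adj y w → ¬G.Adj x w
  · exact aux_key h2 h4 h5 K hcl hmax hmin y x hy hx hxy.symm hs2
  push_neg at hs1 hs2
  obtain ⟨a, haK, hax, hya⟩ := hs1
  obtain ⟨b, hbK, hby, hxb⟩ := hs2
  have hneab : a ≠ b := fun h => hax (h ▸ hxb)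
  have hab : G.Adj a b := hcl a haK b hbK hneab
  exact h4 (aux_C4 x y a b hxy hya hab hxb.symm hax hby
    (fun h => hx (h ▸ haK)) (fun h => hy (h ▸ hbK)))


end MainACB
end AuxACB

/-- G is a split graph iff G has no induced 2K₂, C₄ or C₅. -/
theorem stmt4 {V : Type*} [Fintype V] (G : SimpleGraph V) :
    (∃ C : Set V, G.IsClique C ∧ Gᶜ.IsClique Cᶜ) ↔
      (¬ Nonempty (twoK2 ↪g G) ∧ ¬ Nonempty (SimpleGraph.cycleGraph 4 ↪g G) ∧
        ¬ Nonempty (SimpleGraph.cycleGraph 5 ↪g G)) := by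
  classical
  constructor
  · rintro ⟨C, hC, hI⟩
    have edgeC : ∀ {n : ℕ} {H : SimpleGraph (Fin n)} (f : H ↪g G) (i j : Fin n),
        H.Adj i j → f i ∈ C ∨ f j ∈ C := by
      intro n H f i j hij
      by_contra h
      push_neg at h
      have hne : f i ≠ f j := f.injective.ne hij.ne
      have := hI h.1 h.2 hne
      exact ((SimpleGraph.compl_adj _ _ _).mp this).2 (f.map_rel_iff.mpr hij)
    have nonC : ∀ {n : ℕ} {H : SimpleGraph (Fin n)} (f : H ↪g G) (i j : Fin n),
        i ≠ j → ¬H.Adj i j → ¬(f i ∈ C ∧ f j ∈ C) := by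
      rintro n H f i j hne hnadj ⟨h1, h2⟩
      exact hnadj (f.map_rel_iff.mp (hC h1 h2 (f.injective.ne hne)))
    refine ⟨?_, ?_, ?_⟩
    · rintro ⟨f⟩
      have e01 := edgeC f 0 1 (by rw [aux_twoK2_adj]; simp)
      have e23 := edgeC f 2 3 (by rw [aux_twoK2_adj]; simp)
      have n02 := nonC f 0 2 (by decide) (by rw [aux_twoK2_adj]; decide)
      have n03 := nonC f 0 3 (by decide) (by rw [aux_twoK2_adj]; decide)
      have n12 := nonC f 1 2 (by decide) (by rw [aux_twoK2_adj]; decide)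
      have n13 := nonC f 1 3 (by decide) (by rw [aux_twoK2_adj]; decide)
      tauto
    · rintro ⟨f⟩
      have e01 := edgeC f 0 1 (by decide)
      have e12 := edgeC f 1 2 (by decide)
      have e23 := edgeC f 2 3 (by decide)
      have e30 := edgeC f 3 0 (by decide)
      have n02 := nonC f 0 2 (by decide) (by decide)
      have n13 := nonC f 1 3 (by decide) (by decide)
      tauto
    · rintro ⟨f⟩
      have e01 := edgeC f 0 1 (by decide)
      have e12 := edgeC f 1 2 (by decide)
      have e23 := edgeC f 2 3 (by decide)
      have e34 := edgeC f 3 4 (by decide)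
      have e40 := edgeC f 4 0 (by decide)
      have n02 := nonC f 0 2 (by decide) (by decide)
      have n03 := nonC f 0 3 (by decide) (by decide)
      have n13 := nonC f 1 3 (by decide) (by decide)
      have n14 := nonC f 1 4 (by decide) (by decide)
      have n24 := nonC f 2 4 (by decide) (by decide)
      tauto
  · rintro ⟨h2, h4, h5⟩
    have hCS : (Finset.univ.filter
        fun K : Finset V => ∀ a ∈ K, ∀ b ∈ K, a ≠ b → G.Adj a b).Nonempty :=
      ⟨∅, by simp⟩
    obtain ⟨K₁, hK₁, hK₁max⟩ := Finset.exists_max_image _ Finset.card hCS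
    rw [Finset.mem_filter] at hK₁
    have hCS2 : ((Finset.univ.filter
        fun K : Finset V => ∀ a ∈ K, ∀ b ∈ K, a ≠ b → G.Adj a b).filter
        fun K => K.card = K₁.card).Nonempty :=
      ⟨K₁, Finset.mem_filter.mpr ⟨Finset.mem_filter.mpr ⟨Finset.mem_univ _, hK₁.2⟩, rfl⟩⟩
    obtain ⟨K, hK, hKmin⟩ := Finset.exists_min_image _ (fun K => ecnt G Kᶜ) hCS2
    rw [Finset.mem_filter, Finset.mem_filter] at hK
    obtain ⟨⟨-, hKcl⟩, hKcard⟩ := hK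
    have hmax : ∀ K' : Finset V, (∀ a ∈ K', ∀ b ∈ K', a ≠ b → G.Adj a b) →
        K'.card ≤ K.card := by
      intro K' hK'
      rw [hKcard]
      exact hK₁max K' (Finset.mem_filter.mpr ⟨Finset.mem_univ _, hK'⟩)
    have hmin : ∀ K' : Finset V, (∀ a ∈ K', ∀ b ∈ K', a ≠ b → G.Adj a b) →
        K'.card = K.card → ecnt G Kᶜ ≤ ecnt G K'ᶜ := by
      intro K' hK' hc
      exact hKmin K' (Finset.mem_filter.mpr ⟨Finset.mem_filter.mpr ⟨Finset.mem_univ _, hK'⟩, hc.trans hKcard⟩)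
    refine ⟨↑K, ?_, ?_⟩
    · intro a ha b hb hne
      exact hKcl a (Finset.mem_coe.mp ha) b (Finset.mem_coe.mp hb) hne
    · intro u hu v hv hne
      refine (SimpleGraph.compl_adj _ _ _).mpr ⟨hne, fun hadj => ?_⟩
      exact aux_main h2 h4 h5 K hKcl hmax hmin u v
        (fun h => hu (Finset.mem_coe.mpr h)) (fun h => hv (Finset.mem_coe.mpr h)) hadj
end ACB
end

section
/- For every k ≥ 2, the graph D_k is 3K_2-free, where D_k is the bipartite graph with X={x_1,...,x_{3k-4}}, Y={y_1,...,y_{3k-4}}, and x_i adjacent to y_j iff |i-j| ≤ k-2 and {i,j} ∩ {k-1,...,2k-2} ≠ ∅. -/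
namespace ACB

variable {X Y : Type*}

/-- Edge condition of D_k in 0-indexed arithmetic form, with c = k-2. -/
private def dcond (c a b : ℕ) : Prop :=
  a ≤ b + c ∧ b ≤ a + c ∧ ((c ≤ a ∧ a ≤ 2*c+1) ∨ (c ≤ b ∧ b ≤ 2*c+1))

private lemma dcond_symm {c a b : ℕ} (h : dcond c a b) : dcond c b a := by
  unfold dcond at *; tauto

/-- Core arithmetic lemma: no induced 3K₂ when two of the edges have their
x-endpoint in the middle band. -/
private lemma core (c a1 a2 a3 b1 b2 b3 : ℕ)
    (hM1 : c ≤ a1 ∧ a1 ≤ 2*c+1) (hM2 : c ≤ a2 ∧ a2 ≤ 2*c+1)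
    (e1 : dcond c a1 b1) (e2 : dcond c a2 b2) (e3 : dcond c a3 b3)
    (n12 : ¬ dcond c a1 b2) (n21 : ¬ dcond c a2 b1)
    (n13 : ¬ dcond c a1 b3) (n31 : ¬ dcond c a3 b1)
    (n23 : ¬ dcond c a2 b3) (n32 : ¬ dcond c a3 b2)
    (h12 : a1 ≠ a2) : False := by
  unfold dcond at *
  omega

private lemma drel_iff_dcond {k : ℕ} (hk : 2 ≤ k) (i j : Fin (3*k-4)) :
    Drel k i j ↔ dcond (k-2) i.val j.val := by
  unfold Drel dcond
  omega

/-- for every k ≥ 2, D_k is 3K₂-free. -/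
theorem stmt7 (k : ℕ) (hk : 2 ≤ k) : ¬ Has3K2 (Drel k) := by
  rintro ⟨x, y, hx, hy, h⟩
  set c := k - 2 with hc
  have h' : ∀ i j, dcond c (x i).val (y j).val ↔ i = j := by
    intro i j
    rw [← drel_iff_dcond hk]
    exact h i j
  have e0 : dcond c (x 0).val (y 0).val := (h' 0 0).mpr rfl
  have e1 : dcond c (x 1).val (y 1).val := (h' 1 1).mpr rfl
  have e2 : dcond c (x 2).val (y 2).val := (h' 2 2).mpr rfl
  have n01 : ¬ dcond c (x 0).val (y 1).val := fun hh => absurd ((h' 0 1).mp hh) (by decide)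
  have n02 : ¬ dcond c (x 0).val (y 2).val := fun hh => absurd ((h' 0 2).mp hh) (by decide)
  have n10 : ¬ dcond c (x 1).val (y 0).val := fun hh => absurd ((h' 1 0).mp hh) (by decide)
  have n12 : ¬ dcond c (x 1).val (y 2).val := fun hh => absurd ((h' 1 2).mp hh) (by decide)
  have n20 : ¬ dcond c (x 2).val (y 0).val := fun hh => absurd ((h' 2 0).mp hh) (by decide)
  have n21 : ¬ dcond c (x 2).val (y 1).val := fun hh => absurd ((h' 2 1).mp hh) (by decide)
  have hx01 : (x 0).val ≠ (x 1).val :=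
    fun e => absurd (hx (Fin.val_injective e)) (by decide)
  have hx02 : (x 0).val ≠ (x 2).val :=
    fun e => absurd (hx (Fin.val_injective e)) (by decide)
  have hx12 : (x 1).val ≠ (x 2).val :=
    fun e => absurd (hx (Fin.val_injective e)) (by decide)
  have hy01 : (y 0).val ≠ (y 1).val :=
    fun e => absurd (hy (Fin.val_injective e)) (by decide)
  have hy02 : (y 0).val ≠ (y 2).val :=
    fun e => absurd (hy (Fin.val_injective e)) (by decide)
  have hy12 : (y 1).val ≠ (y 2).val :=
    fun e => absurd (hy (Fin.val_injective e)) (by decide)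
  have m0 := e0.2.2
  have m1 := e1.2.2
  have m2 := e2.2.2
  -- pigeonhole: two of the three edges have their middle endpoint on the same side
  rcases m0 with m0 | m0 <;> rcases m1 with m1 | m1 <;> rcases m2 with m2 | m2
  · exact core c _ _ _ _ _ _ m0 m1 e0 e1 e2 n01 n10 n02 n20 n12 n21 hx01
  · exact core c _ _ _ _ _ _ m0 m1 e0 e1 e2 n01 n10 n02 n20 n12 n21 hx01
  · exact core c _ _ _ _ _ _ m0 m2 e0 e2 e1 n02 n20 n01 n10 n21 n12 hx02
  · exact core c _ _ _ _ _ _ m1 m2 (dcond_symm e1) (dcond_symm e2) (dcond_symm e0)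
      (fun hh => n21 (dcond_symm hh)) (fun hh => n12 (dcond_symm hh))
      (fun hh => n01 (dcond_symm hh)) (fun hh => n10 (dcond_symm hh))
      (fun hh => n02 (dcond_symm hh)) (fun hh => n20 (dcond_symm hh)) hy12
  · exact core c _ _ _ _ _ _ m1 m2 e1 e2 e0 n12 n21 n10 n01 n20 n02 hx12
  · exact core c _ _ _ _ _ _ m0 m2 (dcond_symm e0) (dcond_symm e2) (dcond_symm e1)
      (fun hh => n20 (dcond_symm hh)) (fun hh => n02 (dcond_symm hh))
      (fun hh => n10 (dcond_symm hh)) (fun hh => n01 (dcond_symm hh))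
      (fun hh => n12 (dcond_symm hh)) (fun hh => n21 (dcond_symm hh)) hy02
  · exact core c _ _ _ _ _ _ m0 m1 (dcond_symm e0) (dcond_symm e1) (dcond_symm e2)
      (fun hh => n10 (dcond_symm hh)) (fun hh => n01 (dcond_symm hh))
      (fun hh => n20 (dcond_symm hh)) (fun hh => n02 (dcond_symm hh))
      (fun hh => n21 (dcond_symm hh)) (fun hh => n12 (dcond_symm hh)) hy01
  · exact core c _ _ _ _ _ _ m0 m1 (dcond_symm e0) (dcond_symm e1) (dcond_symm e2)
      (fun hh => n10 (dcond_symm hh)) (fun hh => n01 (dcond_symm hh))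
      (fun hh => n20 (dcond_symm hh)) (fun hh => n02 (dcond_symm hh))
      (fun hh => n21 (dcond_symm hh)) (fun hh => n12 (dcond_symm hh)) hy01
end ACB
end

section
/- For every k ≥ 2, in the graph D_k, ∇_{D_k}(X) = k and ∇_{D_k}(Y) = k. -/
namespace ACB

variable {X Y : Type*}

section Aux

lemma drel_symm (k : ℕ) (i j : Fin (3*k-4)) : Drel k i j ↔ Drel k j i := by
  unfold Drel; tauto

lemma subL (k : ℕ) (hk : 2 ≤ k) (i i' : Fin (3*k-4)) (h1 : i.val < k-2)
    (h2 : i.val ≤ i'.val) (h3 : i'.val ≤ 2*(k-2)) :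
    Nb (Drel k) i ⊆ Nb (Drel k) i' := by
  intro j hj
  simp only [Nb, Set.mem_setOf_eq, Drel] at *
  omega

lemma subR (k : ℕ) (hk : 2 ≤ k) (i i' : Fin (3*k-4)) (h1 : 2*(k-2)+1 < i.val)
    (h2 : i'.val ≤ i.val) (h3 : k-1 ≤ i'.val) :
    Nb (Drel k) i ⊆ Nb (Drel k) i' := by
  intro j hj
  simp only [Nb, Set.mem_setOf_eq, Drel] at *
  omega

lemma mid_not_sub (k : ℕ) (hk : 2 ≤ k) (i i' : Fin (3*k-4))
    (hi1 : k-2 ≤ i.val) (hi2 : i.val ≤ 2*k-3)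
    (hi1' : k-2 ≤ i'.val) (hi2' : i'.val ≤ 2*k-3) (hne : i.val ≠ i'.val) :
    ¬ Nb (Drel k) i ⊆ Nb (Drel k) i' := by
  intro hsub
  rcases Nat.lt_or_ge i.val i'.val with h | h
  · have hmem : (⟨i.val - (k-2), by omega⟩ : Fin (3*k-4)) ∈ Nb (Drel k) i := by
      simp only [Nb, Set.mem_setOf_eq, Drel]; omega
    have := hsub hmem
    simp only [Nb, Set.mem_setOf_eq, Drel] at this
    omega
  · have hmem : (⟨i.val + (k-2), by omega⟩ : Fin (3*k-4)) ∈ Nb (Drel k) i := by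
      simp only [Nb, Set.mem_setOf_eq, Drel]; omega
    have := hsub hmem
    simp only [Nb, Set.mem_setOf_eq, Drel] at this
    omega

lemma upper_bound (k : ℕ) (hk : 2 ≤ k) (S : Finset (Fin (3*k-4)))
    (hS : XAntichain (Drel k) S) : S.card ≤ k := by
  by_cases hL : ∃ l ∈ S, l.val < k-2
  · obtain ⟨l, hl, hlv⟩ := hL
    have key : ∀ s ∈ S, s ≠ l → 2*k-3 ≤ s.val := by
      intro s hs hne
      by_contra hcon
      push_neg at hcon
      rcases Nat.lt_or_ge s.val l.val with h | h
      · exact hS hs hl hne (subL k hk s l (by omega) (by omega) (by omega))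
      · have hne' : l.val ≠ s.val := fun h' => hne (Fin.ext h'.symm)
        exact hS hl hs (fun h' => hne h'.symm)
          (subL k hk l s (by omega) (by omega) (by omega))
    have h1 : (S.erase l).card ≤ 1 := by
      rw [Finset.card_le_one]
      intro a ha b hb
      by_contra hab
      have ha' := Finset.mem_of_mem_erase ha
      have hb' := Finset.mem_of_mem_erase hb
      have ka := key a ha' (Finset.ne_of_mem_erase ha)
      have kb := key b hb' (Finset.ne_of_mem_erase hb)
      rcases Nat.lt_or_ge a.val b.val with h | h
      · exact hS hb' ha' (fun h' => hab h'.symm)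
          (subR k hk b a (by omega) (by omega) (by omega))
      · have : a.val ≠ b.val := fun h' => hab (Fin.ext h')
        exact hS ha' hb' hab (subR k hk a b (by omega) (by omega) (by omega))
    have := Finset.card_erase_of_mem hl
    have hSpos : 1 ≤ S.card := Finset.card_pos.mpr ⟨l, hl⟩
    omega
  · by_cases hR : ∃ r ∈ S, 2*k-3 < r.val
    · obtain ⟨r, hr, hrv⟩ := hR
      have key : ∀ s ∈ S, s ≠ r → s.val ≤ k-2 := by
        intro s hs hne
        by_contra hcon
        push_neg at hcon
        rcases Nat.lt_or_ge (2*k-3) s.val with h | h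
        · rcases Nat.lt_or_ge s.val r.val with h2 | h2
          · exact hS hr hs (fun h' => hne h'.symm)
              (subR k hk r s (by omega) (by omega) (by omega))
          · have : s.val ≠ r.val := fun h' => hne (Fin.ext h')
            exact hS hs hr hne (subR k hk s r (by omega) (by omega) (by omega))
        · exact hS hr hs (fun h' => hne h'.symm)
            (subR k hk r s (by omega) (by omega) (by omega))
      have h1 : (S.erase r).card ≤ 1 := by
        rw [Finset.card_le_one]
        intro a ha b hb
        by_contra hab
        have ha' := Finset.mem_of_mem_erase ha
        have hb' := Finset.mem_of_mem_erase hb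
        have ka := key a ha' (Finset.ne_of_mem_erase ha)
        have kb := key b hb' (Finset.ne_of_mem_erase hb)
        rcases Nat.lt_or_ge a.val b.val with h | h
        · exact hS ha' hb' hab (subL k hk a b (by omega) (by omega) (by omega))
        · have : a.val ≠ b.val := fun h' => hab (Fin.ext h')
          exact hS hb' ha' (fun h' => hab h'.symm)
            (subL k hk b a (by omega) (by omega) (by omega))
      have := Finset.card_erase_of_mem hr
      have hSpos : 1 ≤ S.card := Finset.card_pos.mpr ⟨r, hr⟩
      omega
    · push_neg at hL hR
      have himg : S.image Fin.val ⊆ Finset.Icc (k-2) (2*k-3) := by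
        intro t ht
        simp only [Finset.mem_image] at ht
        obtain ⟨s, hs, rfl⟩ := ht
        simp only [Finset.mem_Icc]
        exact ⟨hL s hs, hR s hs⟩
      have hcard : (S.image Fin.val).card = S.card :=
        Finset.card_image_of_injective _ Fin.val_injective
      have := Finset.card_le_card himg
      rw [Nat.card_Icc] at this
      omega

lemma lower_bound (k : ℕ) (hk : 2 ≤ k) :
    ∃ S : Finset (Fin (3*k-4)), XAntichain (Drel k) S ∧ S.card = k := by
  have hbd : ∀ t ∈ Finset.Icc (k-2) (2*k-3), t < 3*k-4 := by
    intro t ht; simp only [Finset.mem_Icc] at ht; omega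
  refine ⟨(Finset.Icc (k-2) (2*k-3)).attachFin hbd, ?_, ?_⟩
  · intro a ha b hb hne
    simp only [Finset.mem_coe,
      Finset.mem_attachFin, Finset.mem_Icc] at ha hb
    have hval : a.val ≠ b.val := fun h => hne (Fin.ext h)
    exact mid_not_sub k hk a b ha.1 ha.2 hb.1 hb.2 hval
  · rw [Finset.card_attachFin, Nat.card_Icc]; omega

end Aux

/-- for every k ≥ 2, ∇_{D_k}(X) = k and ∇_{D_k}(Y) = k. -/
theorem stmt9 (k : ℕ) (hk : 2 ≤ k) :
    dilwX (Drel k) = k ∧ dilwY (Drel k) = k := by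
  have hnbY : NbY (Drel k) = Nb (Drel k) :=
    funext fun j => Set.ext fun i => drel_symm k i j
  have hub : ∀ n ∈ {n | ∃ S : Finset (Fin (3*k-4)), XAntichain (Drel k) S ∧ S.card = n},
      n ≤ k := by
    rintro n ⟨S, h1, rfl⟩
    exact upper_bound k hk S h1
  have hmem : k ∈ {n | ∃ S : Finset (Fin (3*k-4)), XAntichain (Drel k) S ∧ S.card = n} :=
    lower_bound k hk
  have hx : dilwX (Drel k) = k := by
    apply le_antisymm
    · exact csSup_le ⟨k, hmem⟩ hub
    · exact le_csSup ⟨k, fun n hn => hub n hn⟩ hmem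
  refine ⟨hx, ?_⟩
  have hYX : dilwY (Drel k) = dilwX (Drel k) := by
    unfold dilwY dilwX YAntichain XAntichain
    rw [hnbY]
  rw [hYX, hx]

end ACB
end

section
/- For all k > l ≥ 2, there exists an ACB graph G=(X,Y,E) with ∇_G(X) = k and ∇_G(Y) = l. -/
namespace ACB

variable {X Y : Type*}

def Afun (k I : ℕ) : ℕ := if I ≤ k-2 then k-1 else I + 2 - k
def Bfun (k I : ℕ) : ℕ := if 2*k-1 ≤ I then 2*k-2 else I + k - 2
def gp (k l j : ℕ) : ℕ := if j ≤ k-2 then j+1 else j + (k+1-l)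

def Erel (k l : ℕ) (i : Fin (3*k-4)) (j : Fin (2*k+l-4)) : Prop :=
  Afun k (i.val+1) ≤ gp k l j.val ∧ gp k l j.val ≤ Bfun k (i.val+1)

lemma interval_noCycle3 {n m : ℕ} (lo hi : Fin n → ℕ) (f : Fin m → ℕ) :
    ¬ HasCycle (fun i j => lo i ≤ f j ∧ f j ≤ hi i) 3 := by
  rintro ⟨x, y, -, -, h⟩
  have h' : ∀ i j : Fin 3, (lo (x i) ≤ f (y j) ∧ f (y j) ≤ hi (x i)) ↔
      (j.val = i.val ∨ j.val = (i.val + 1) % 3) := h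
  have e00 := (h' 0 0).mpr (by decide)
  have e01 := (h' 0 1).mpr (by decide)
  have e11 := (h' 1 1).mpr (by decide)
  have e12 := (h' 1 2).mpr (by decide)
  have e22 := (h' 2 2).mpr (by decide)
  have e20 := (h' 2 0).mpr (by decide)
  have n02 : ¬ (lo (x 0) ≤ f (y 2) ∧ f (y 2) ≤ hi (x 0)) :=
    fun hc => absurd ((h' 0 2).mp hc) (by decide)
  have n10 : ¬ (lo (x 1) ≤ f (y 0) ∧ f (y 0) ≤ hi (x 1)) :=
    fun hc => absurd ((h' 1 0).mp hc) (by decide)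
  have n21 : ¬ (lo (x 2) ≤ f (y 1) ∧ f (y 1) ≤ hi (x 2)) :=
    fun hc => absurd ((h' 2 1).mp hc) (by decide)
  omega

lemma interval_noCycle4 {n m : ℕ} (lo hi : Fin n → ℕ) (f : Fin m → ℕ) :
    ¬ HasCycle (fun i j => lo i ≤ f j ∧ f j ≤ hi i) 4 := by
  rintro ⟨x, y, -, -, h⟩
  have h' : ∀ i j : Fin 4, (lo (x i) ≤ f (y j) ∧ f (y j) ≤ hi (x i)) ↔
      (j.val = i.val ∨ j.val = (i.val + 1) % 4) := h
  have e00 := (h' 0 0).mpr (by decide)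
  have e01 := (h' 0 1).mpr (by decide)
  have e11 := (h' 1 1).mpr (by decide)
  have e12 := (h' 1 2).mpr (by decide)
  have e22 := (h' 2 2).mpr (by decide)
  have e23 := (h' 2 3).mpr (by decide)
  have e33 := (h' 3 3).mpr (by decide)
  have e30 := (h' 3 0).mpr (by decide)
  have n02 : ¬ (lo (x 0) ≤ f (y 2) ∧ f (y 2) ≤ hi (x 0)) :=
    fun hc => absurd ((h' 0 2).mp hc) (by decide)
  have n03 : ¬ (lo (x 0) ≤ f (y 3) ∧ f (y 3) ≤ hi (x 0)) :=
    fun hc => absurd ((h' 0 3).mp hc) (by decide)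
  have n10 : ¬ (lo (x 1) ≤ f (y 0) ∧ f (y 0) ≤ hi (x 1)) :=
    fun hc => absurd ((h' 1 0).mp hc) (by decide)
  have n13 : ¬ (lo (x 1) ≤ f (y 3) ∧ f (y 3) ≤ hi (x 1)) :=
    fun hc => absurd ((h' 1 3).mp hc) (by decide)
  have n20 : ¬ (lo (x 2) ≤ f (y 0) ∧ f (y 0) ≤ hi (x 2)) :=
    fun hc => absurd ((h' 2 0).mp hc) (by decide)
  have n21 : ¬ (lo (x 2) ≤ f (y 1) ∧ f (y 1) ≤ hi (x 2)) :=
    fun hc => absurd ((h' 2 1).mp hc) (by decide)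
  have n31 : ¬ (lo (x 3) ≤ f (y 1) ∧ f (y 1) ≤ hi (x 3)) :=
    fun hc => absurd ((h' 3 1).mp hc) (by decide)
  have n32 : ¬ (lo (x 3) ≤ f (y 2) ∧ f (y 2) ≤ hi (x 3)) :=
    fun hc => absurd ((h' 3 2).mp hc) (by decide)
  omega

lemma gp_lt (k l : ℕ) (hlk : l < k) {a b : ℕ} (h : a < b) :
    gp k l a < gp k l b := by
  unfold gp; split_ifs <;> omega

lemma gp_bounds (k l : ℕ) (hl : 2 ≤ l) (hlk : l < k) {j : ℕ} (hj : j < 2*k+l-4) :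
    1 ≤ gp k l j ∧ gp k l j ≤ 3*k-4 ∧ (gp k l j ≤ k-1 ∨ 2*k-l ≤ gp k l j) := by
  unfold gp; split_ifs <;> omega

set_option maxHeartbeats 1600000 in
lemma aux3K2 (k l I1 I2 I3 J1 J2 J3 : ℕ) (hl : 2 ≤ l) (hlk : l < k)
    (hI : 1 ≤ I1 ∧ I1 ≤ 3*k-4 ∧ 1 ≤ I2 ∧ I2 ≤ 3*k-4 ∧ 1 ≤ I3 ∧ I3 ≤ 3*k-4)
    (hJ1 : 1 ≤ J1 ∧ J1 ≤ 3*k-4 ∧ (J1 ≤ k-1 ∨ 2*k-l ≤ J1))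
    (hJ2 : 1 ≤ J2 ∧ J2 ≤ 3*k-4 ∧ (J2 ≤ k-1 ∨ 2*k-l ≤ J2))
    (hJ3 : 1 ≤ J3 ∧ J3 ≤ 3*k-4 ∧ (J3 ≤ k-1 ∨ 2*k-l ≤ J3))
    (h12 : J1 < J2) (h23 : J2 < J3)
    (e1 : Afun k I1 ≤ J1 ∧ J1 ≤ Bfun k I1)
    (e2 : Afun k I2 ≤ J2 ∧ J2 ≤ Bfun k I2)
    (e3 : Afun k I3 ≤ J3 ∧ J3 ≤ Bfun k I3)
    (n12 : ¬(Afun k I1 ≤ J2 ∧ J2 ≤ Bfun k I1))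
    (n13 : ¬(Afun k I1 ≤ J3 ∧ J3 ≤ Bfun k I1))
    (n21 : ¬(Afun k I2 ≤ J1 ∧ J1 ≤ Bfun k I2))
    (n23 : ¬(Afun k I2 ≤ J3 ∧ J3 ≤ Bfun k I2))
    (n31 : ¬(Afun k I3 ≤ J1 ∧ J1 ≤ Bfun k I3))
    (n32 : ¬(Afun k I3 ≤ J2 ∧ J2 ≤ Bfun k I3)) : False := by
  unfold Afun Bfun at e1 e2 e3 n12 n13 n21 n23 n31 n32
  split_ifs at e1 e2 e3 n12 n13 n21 n23 n31 n32 <;> omega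

set_option maxHeartbeats 1600000 in
lemma no3K2 (k l : ℕ) (hl : 2 ≤ l) (hlk : l < k) : ¬ Has3K2 (Erel k l) := by
  rintro ⟨x, y, hx, hy, h⟩
  set J : Fin 3 → ℕ := fun a => gp k l (y a).val with hJdef
  have key : ∀ a b c : Fin 3, a ≠ b → b ≠ c → a ≠ c →
      J a < J b → J b < J c → False := by
    intro a b c hab hbc hac h1 h2
    have Ba := gp_bounds k l hl hlk (y a).isLt
    have Bb := gp_bounds k l hl hlk (y b).isLt
    have Bc := gp_bounds k l hl hlk (y c).isLt
    exact aux3K2 k l ((x a).val+1) ((x b).val+1) ((x c).val+1) (J a) (J b) (J c)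
      hl hlk
      ⟨by omega, by have := (x a).isLt; omega, by omega, by have := (x b).isLt; omega,
        by omega, by have := (x c).isLt; omega⟩
      ⟨Ba.1, Ba.2.1, Ba.2.2⟩ ⟨Bb.1, Bb.2.1, Bb.2.2⟩ ⟨Bc.1, Bc.2.1, Bc.2.2⟩
      h1 h2
      ((h a a).mpr rfl) ((h b b).mpr rfl) ((h c c).mpr rfl)
      (fun hc => hab ((h a b).mp hc))
      (fun hc => hac ((h a c).mp hc))
      (fun hc => (Ne.symm hab) ((h b a).mp hc))
      (fun hc => hbc ((h b c).mp hc))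
      (fun hc => (Ne.symm hac) ((h c a).mp hc))
      (fun hc => (Ne.symm hbc) ((h c b).mp hc))
  have hJne : ∀ a b : Fin 3, a ≠ b → J a ≠ J b := by
    intro a b hab he
    have hv : (y a).val ≠ (y b).val := fun e => hab (hy (Fin.ext e))
    rcases Nat.lt_or_ge (y a).val (y b).val with hlt | hge
    · exact absurd he (Nat.ne_of_lt (gp_lt k l hlk hlt))
    · have : (y b).val < (y a).val := by omega
      exact absurd he.symm (Nat.ne_of_lt (gp_lt k l hlk this))
  rcases lt_trichotomy (J 0) (J 1) with h1 | h1 | h1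
  · rcases lt_trichotomy (J 1) (J 2) with h2 | h2 | h2
    · exact key 0 1 2 (by decide) (by decide) (by decide) h1 h2
    · exact hJne 1 2 (by decide) h2
    · rcases lt_trichotomy (J 0) (J 2) with h3 | h3 | h3
      · exact key 0 2 1 (by decide) (by decide) (by decide) h3 h2
      · exact hJne 0 2 (by decide) h3
      · exact key 2 0 1 (by decide) (by decide) (by decide) h3 h1
  · exact hJne 0 1 (by decide) h1
  · rcases lt_trichotomy (J 0) (J 2) with h3 | h3 | h3
    · exact key 1 0 2 (by decide) (by decide) (by decide) h1 h3
    · exact hJne 0 2 (by decide) h3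
    · rcases lt_trichotomy (J 1) (J 2) with h2 | h2 | h2
      · exact key 1 2 0 (by decide) (by decide) (by decide) h2 h3
      · exact hJne 1 2 (by decide) h2
      · exact key 2 1 0 (by decide) (by decide) (by decide) h2 h1

def cXv (k I : ℕ) : ℕ := if I ≤ k-1 then 0 else if 2*k-2 ≤ I then 1 else I + 2 - k
def cYv (k l J : ℕ) : ℕ := if J ≤ k-1 then 0 else if 2*k-2 ≤ J then 1 else J + 2 + l - 2*k

lemma cX_lt (k I : ℕ) (hk : 3 ≤ k) (hI : I ≤ 3*k-4) : cXv k I < k := by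
  unfold cXv; split_ifs <;> omega

set_option maxHeartbeats 1600000 in
lemma cX_cmp (k I I' : ℕ) (hk : 3 ≤ k) (hI1 : 1 ≤ I) (hI2 : I ≤ 3*k-4)
    (hI1' : 1 ≤ I') (hI2' : I' ≤ 3*k-4) (h : cXv k I = cXv k I') :
    (Afun k I ≤ Afun k I' ∧ Bfun k I' ≤ Bfun k I) ∨
    (Afun k I' ≤ Afun k I ∧ Bfun k I ≤ Bfun k I') := by
  unfold cXv Afun Bfun at *; split_ifs at * <;> omega

lemma cY_lt (k l J : ℕ) (hl : 2 ≤ l) (hlk : l < k)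
    (hJ : J ≤ k-1 ∨ 2*k-l ≤ J) (hJ2 : J ≤ 3*k-4) : cYv k l J < l := by
  unfold cYv; split_ifs <;> omega

set_option maxHeartbeats 1600000 in
lemma cY_cmp (k l J J' : ℕ) (hl : 2 ≤ l) (hlk : l < k)
    (hJa : 1 ≤ J) (hJb : J ≤ 3*k-4) (hJc : J ≤ k-1 ∨ 2*k-l ≤ J)
    (hJa' : 1 ≤ J') (hJb' : J' ≤ 3*k-4) (hJc' : J' ≤ k-1 ∨ 2*k-l ≤ J')
    (h : cYv k l J = cYv k l J') :
    (Afun k J ≤ Afun k J' ∧ Bfun k J' ≤ Bfun k J) ∨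
    (Afun k J' ≤ Afun k J ∧ Bfun k J ≤ Bfun k J') := by
  unfold cYv Afun Bfun at *; split_ifs at * <;> omega

lemma Erel_symm (k I J : ℕ) (hk : 3 ≤ k) (hI : 1 ≤ I) (hI2 : I ≤ 3*k-4)
    (hJ : 1 ≤ J) (hJ2 : J ≤ 3*k-4) :
    (Afun k I ≤ J ∧ J ≤ Bfun k I) ↔ (Afun k J ≤ I ∧ I ≤ Bfun k J) := by
  unfold Afun Bfun; split_ifs <;> omega

lemma Nb_sub (k l : ℕ) (a b : Fin (3*k-4))
    (h1 : Afun k (b.val+1) ≤ Afun k (a.val+1))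
    (h2 : Bfun k (a.val+1) ≤ Bfun k (b.val+1)) :
    Nb (Erel k l) a ⊆ Nb (Erel k l) b := by
  intro y hy
  have hy' : Erel k l a y := hy
  exact show Erel k l b y from ⟨le_trans h1 hy'.1, le_trans hy'.2 h2⟩

lemma NbY_sub (k l : ℕ) (hl : 2 ≤ l) (hlk : l < k) (a b : Fin (2*k+l-4))
    (h1 : Afun k (gp k l b.val) ≤ Afun k (gp k l a.val))
    (h2 : Bfun k (gp k l a.val) ≤ Bfun k (gp k l b.val)) :
    NbY (Erel k l) a ⊆ NbY (Erel k l) b := by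
  intro i hi
  have hi' : Erel k l i a := hi
  have hk : 3 ≤ k := by omega
  have Ba := gp_bounds k l hl hlk a.isLt
  have Bb := gp_bounds k l hl hlk b.isLt
  have hI1 : 1 ≤ i.val + 1 := by omega
  have hI2 : i.val + 1 ≤ 3*k-4 := by have := i.isLt; omega
  have h3 := (Erel_symm k (i.val+1) (gp k l a.val) hk hI1 hI2 Ba.1 Ba.2.1).mp hi'
  exact show Erel k l i b from
    (Erel_symm k (i.val+1) (gp k l b.val) hk hI1 hI2 Bb.1 Bb.2.1).mpr
      ⟨le_trans h1 h3.1, le_trans h3.2 h2⟩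

lemma X_upper (k l : ℕ) (hl : 2 ≤ l) (hlk : l < k)
    (S : Finset (Fin (3*k-4))) (hS : XAntichain (Erel k l) S) : S.card ≤ k := by
  have hk : 3 ≤ k := by omega
  have := Finset.card_le_card_of_injOn (fun i : Fin (3*k-4) => cXv k (i.val+1))
    (s := S) (t := Finset.range k)
    (fun a _ => Finset.mem_range.mpr (cX_lt k (a.val+1) hk (by have := a.isLt; omega)))
    (by
      intro a ha b hb hab
      by_contra hne
      rcases cX_cmp k (a.val+1) (b.val+1) hk (by omega) (by have := a.isLt; omega)
        (by omega) (by have := b.isLt; omega) hab with ⟨h1, h2⟩ | ⟨h1, h2⟩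
      · exact hS hb ha (Ne.symm hne) (Nb_sub k l b a h1 h2)
      · exact hS ha hb hne (Nb_sub k l a b h1 h2))
  simpa using this

lemma Y_upper (k l : ℕ) (hl : 2 ≤ l) (hlk : l < k)
    (S : Finset (Fin (2*k+l-4))) (hS : YAntichain (Erel k l) S) : S.card ≤ l := by
  have := Finset.card_le_card_of_injOn (fun j : Fin (2*k+l-4) => cYv k l (gp k l j.val))
    (s := S) (t := Finset.range l)
    (fun a _ => by
      have Ba := gp_bounds k l hl hlk a.isLt
      exact Finset.mem_range.mpr (cY_lt k l (gp k l a.val) hl hlk Ba.2.2 Ba.2.1))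
    (by
      intro a ha b hb hab
      by_contra hne
      have Ba := gp_bounds k l hl hlk a.isLt
      have Bb := gp_bounds k l hl hlk b.isLt
      rcases cY_cmp k l (gp k l a.val) (gp k l b.val) hl hlk
        Ba.1 Ba.2.1 Ba.2.2 Bb.1 Bb.2.1 Bb.2.2 hab with ⟨h1, h2⟩ | ⟨h1, h2⟩
      · exact hS hb ha (Ne.symm hne) (NbY_sub k l hl hlk b a h1 h2)
      · exact hS ha hb hne (NbY_sub k l hl hlk a b h1 h2))
  simpa using this

set_option maxHeartbeats 1600000 in
lemma X_lower (k l : ℕ) (hl : 2 ≤ l) (hlk : l < k) :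
    ∃ S : Finset (Fin (3*k-4)), XAntichain (Erel k l) S ∧ S.card = k := by
  have hk : 3 ≤ k := by omega
  refine ⟨(Finset.range k).image
    (fun t => (⟨min (k-2+t) (3*k-5), by omega⟩ : Fin (3*k-4))), ?_, ?_⟩
  · intro a ha b hb hne
    obtain ⟨t, ht, rfl⟩ := Finset.mem_image.mp (Finset.mem_coe.mp ha)
    obtain ⟨s, hs, rfl⟩ := Finset.mem_image.mp (Finset.mem_coe.mp hb)
    rw [Finset.mem_range] at ht hs
    have hts : t ≠ s := by
      intro e; subst e; exact hne rfl
    intro hsub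
    rcases Nat.lt_or_ge t s with hlt | hge
    · have hEa : Erel k l ⟨min (k-2+t) (3*k-5), by omega⟩ ⟨t, by omega⟩ := by
        show Afun k (min (k-2+t) (3*k-5) + 1) ≤ gp k l t ∧
          gp k l t ≤ Bfun k (min (k-2+t) (3*k-5) + 1)
        unfold Afun Bfun gp; split_ifs <;> omega
      have hEb : ¬ Erel k l ⟨min (k-2+s) (3*k-5), by omega⟩ ⟨t, by omega⟩ := by
        show ¬ (Afun k (min (k-2+s) (3*k-5) + 1) ≤ gp k l t ∧
          gp k l t ≤ Bfun k (min (k-2+s) (3*k-5) + 1))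
        unfold Afun Bfun gp; split_ifs <;> omega
      exact hEb (hsub hEa)
    · have hgt : s < t := by omega
      have hEa : Erel k l ⟨min (k-2+t) (3*k-5), by omega⟩ ⟨k+l+t-4, by omega⟩ := by
        show Afun k (min (k-2+t) (3*k-5) + 1) ≤ gp k l (k+l+t-4) ∧
          gp k l (k+l+t-4) ≤ Bfun k (min (k-2+t) (3*k-5) + 1)
        unfold Afun Bfun gp; split_ifs <;> omega
      have hEb : ¬ Erel k l ⟨min (k-2+s) (3*k-5), by omega⟩ ⟨k+l+t-4, by omega⟩ := by
        show ¬ (Afun k (min (k-2+s) (3*k-5) + 1) ≤ gp k l (k+l+t-4) ∧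
          gp k l (k+l+t-4) ≤ Bfun k (min (k-2+s) (3*k-5) + 1))
        unfold Afun Bfun gp; split_ifs <;> omega
      exact hEb (hsub hEa)
  · rw [Finset.card_image_of_injOn, Finset.card_range]
    intro t ht s hs he
    rw [Finset.mem_coe, Finset.mem_range] at ht hs
    have := congrArg Fin.val he
    simp only at this
    omega

set_option maxHeartbeats 1600000 in
lemma Y_lower (k l : ℕ) (hl : 2 ≤ l) (hlk : l < k) :
    ∃ S : Finset (Fin (2*k+l-4)), YAntichain (Erel k l) S ∧ S.card = l := by
  have hk : 3 ≤ k := by omega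
  refine ⟨(Finset.range l).image
    (fun s => (⟨min (k-2+s) (2*k+l-5), by omega⟩ : Fin (2*k+l-4))), ?_, ?_⟩
  · intro a ha b hb hne
    obtain ⟨s, hs, rfl⟩ := Finset.mem_image.mp (Finset.mem_coe.mp ha)
    obtain ⟨t, ht, rfl⟩ := Finset.mem_image.mp (Finset.mem_coe.mp hb)
    rw [Finset.mem_range] at ht hs
    have hts : s ≠ t := by
      intro e; subst e; exact hne rfl
    intro hsub
    rcases Nat.lt_or_ge t s with hlt | hge
    · -- t < s, so s ≥ 1; witness x-vertex with I = 3k-3+s-l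
      have hEa : Erel k l ⟨min (3*k-4+s-l) (3*k-5), by omega⟩
          ⟨min (k-2+s) (2*k+l-5), by omega⟩ := by
        show Afun k (min (3*k-4+s-l) (3*k-5) + 1) ≤ gp k l (min (k-2+s) (2*k+l-5)) ∧
          gp k l (min (k-2+s) (2*k+l-5)) ≤ Bfun k (min (3*k-4+s-l) (3*k-5) + 1)
        unfold Afun Bfun gp; split_ifs <;> omega
      have hEb : ¬ Erel k l ⟨min (3*k-4+s-l) (3*k-5), by omega⟩
          ⟨min (k-2+t) (2*k+l-5), by omega⟩ := by
        show ¬ (Afun k (min (3*k-4+s-l) (3*k-5) + 1) ≤ gp k l (min (k-2+t) (2*k+l-5)) ∧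
          gp k l (min (k-2+t) (2*k+l-5)) ≤ Bfun k (min (3*k-4+s-l) (3*k-5) + 1))
        unfold Afun Bfun gp; split_ifs <;> omega
      exact hEb (hsub hEa)
    · have hgt : s < t := by omega
      rcases Nat.eq_zero_or_pos s with hs0 | hs1
      · subst hs0
        have hEa : Erel k l ⟨0, by omega⟩ ⟨min (k-2+0) (2*k+l-5), by omega⟩ := by
          show Afun k (0 + 1) ≤ gp k l (min (k-2+0) (2*k+l-5)) ∧
            gp k l (min (k-2+0) (2*k+l-5)) ≤ Bfun k (0 + 1)
          unfold Afun Bfun gp; split_ifs <;> omega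
        have hEb : ¬ Erel k l ⟨0, by omega⟩ ⟨min (k-2+t) (2*k+l-5), by omega⟩ := by
          show ¬ (Afun k (0 + 1) ≤ gp k l (min (k-2+t) (2*k+l-5)) ∧
            gp k l (min (k-2+t) (2*k+l-5)) ≤ Bfun k (0 + 1))
          unfold Afun Bfun gp; split_ifs <;> omega
        exact hEb (hsub hEa)
      · have hEa : Erel k l ⟨min (k+s-l) (3*k-5), by omega⟩
            ⟨min (k-2+s) (2*k+l-5), by omega⟩ := by
          show Afun k (min (k+s-l) (3*k-5) + 1) ≤ gp k l (min (k-2+s) (2*k+l-5)) ∧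
            gp k l (min (k-2+s) (2*k+l-5)) ≤ Bfun k (min (k+s-l) (3*k-5) + 1)
          unfold Afun Bfun gp; split_ifs <;> omega
        have hEb : ¬ Erel k l ⟨min (k+s-l) (3*k-5), by omega⟩
            ⟨min (k-2+t) (2*k+l-5), by omega⟩ := by
          show ¬ (Afun k (min (k+s-l) (3*k-5) + 1) ≤ gp k l (min (k-2+t) (2*k+l-5)) ∧
            gp k l (min (k-2+t) (2*k+l-5)) ≤ Bfun k (min (k+s-l) (3*k-5) + 1))
          unfold Afun Bfun gp; split_ifs <;> omega
        exact hEb (hsub hEa)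
  · rw [Finset.card_image_of_injOn, Finset.card_range]
    intro t ht s hs he
    rw [Finset.mem_coe, Finset.mem_range] at ht hs
    have := congrArg Fin.val he
    simp only at this
    omega

lemma sSup_eq_of {T : Set ℕ} {c : ℕ} (hmem : c ∈ T) (hub : ∀ n ∈ T, n ≤ c) :
    sSup T = c :=
  le_antisymm (csSup_le ⟨c, hmem⟩ hub) (le_csSup ⟨c, hub⟩ hmem)


/-- for all k > l ≥ 2 there is an ACB graph with ∇(X) = k and ∇(Y) = l. -/
theorem stmt12 (k l : ℕ) (hl : 2 ≤ l) (hlk : l < k) :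
    ∃ (n m : ℕ) (E : Fin n → Fin m → Prop),
      ACBGraph E ∧ dilwX E = k ∧ dilwY E = l := by
  obtain ⟨SX, hSX, hSXcard⟩ := X_lower k l hl hlk
  obtain ⟨SY, hSY, hSYcard⟩ := Y_lower k l hl hlk
  refine ⟨3*k-4, 2*k+l-4, Erel k l,
    ⟨no3K2 k l hl hlk,
     interval_noCycle3 (fun i => Afun k (i.val+1)) (fun i => Bfun k (i.val+1))
       (fun j => gp k l j.val),
     interval_noCycle4 (fun i => Afun k (i.val+1)) (fun i => Bfun k (i.val+1))
       (fun j => gp k l j.val)⟩, ?_, ?_⟩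
  · exact sSup_eq_of ⟨SX, hSX, hSXcard⟩
      (by rintro n ⟨S, hS, rfl⟩; exact X_upper k l hl hlk S hS)
  · exact sSup_eq_of ⟨SY, hSY, hSYcard⟩
      (by rintro n ⟨S, hS, rfl⟩; exact Y_upper k l hl hlk S hS)
end ACB
end

section
/- For every k ≥ 2, the graph B_k is an ACB graph with ∇_{B_k}(X) = k and ∇_{B_k}(Y) = 2, where B_k is the bipartite graph with X={x_1,...,x_k}, Y={y_1,...,y_{2k-2}}, and N(x_i) = {y_i,...,y_{i+k-2}}. -/
namespace ACB

variable {X Y : Type*}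

section Stmt13Aux

lemma stmt13_no3K2 (k : ℕ) (hk : 2 ≤ k) : ¬ Has3K2 (Brel k) := by
  rintro ⟨x, y, -, -, h⟩
  have e0 := (h 0 0).mpr rfl
  have e1 := (h 1 1).mpr rfl
  have e2 := (h 2 2).mpr rfl
  have n01 : ¬ Brel k (x 0) (y 1) := fun hB => absurd ((h 0 1).mp hB) (by decide)
  have n02 : ¬ Brel k (x 0) (y 2) := fun hB => absurd ((h 0 2).mp hB) (by decide)
  have n10 : ¬ Brel k (x 1) (y 0) := fun hB => absurd ((h 1 0).mp hB) (by decide)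
  have n12 : ¬ Brel k (x 1) (y 2) := fun hB => absurd ((h 1 2).mp hB) (by decide)
  have n20 : ¬ Brel k (x 2) (y 0) := fun hB => absurd ((h 2 0).mp hB) (by decide)
  have n21 : ¬ Brel k (x 2) (y 1) := fun hB => absurd ((h 2 1).mp hB) (by decide)
  simp only [Brel] at e0 e1 e2 n01 n02 n10 n12 n20 n21
  have b0 := (x 0).isLt
  have b1 := (x 1).isLt
  have b2 := (x 2).isLt
  omega

lemma stmt13_noC6 (k : ℕ) (hk : 2 ≤ k) : ¬ HasCycle (Brel k) 3 := by
  rintro ⟨x, y, -, -, h⟩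
  have e00 := (h 0 0).mpr (by decide)
  have e01 := (h 0 1).mpr (by decide)
  have e11 := (h 1 1).mpr (by decide)
  have e12 := (h 1 2).mpr (by decide)
  have e22 := (h 2 2).mpr (by decide)
  have e20 := (h 2 0).mpr (by decide)
  have n02 : ¬ Brel k (x 0) (y 2) := fun hB => absurd ((h 0 2).mp hB) (by decide)
  have n10 : ¬ Brel k (x 1) (y 0) := fun hB => absurd ((h 1 0).mp hB) (by decide)
  have n21 : ¬ Brel k (x 2) (y 1) := fun hB => absurd ((h 2 1).mp hB) (by decide)
  simp only [Brel] at e00 e01 e11 e12 e22 e20 n02 n10 n21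
  omega

lemma stmt13_noC8 (k : ℕ) (hk : 2 ≤ k) : ¬ HasCycle (Brel k) 4 := by
  rintro ⟨x, y, -, -, h⟩
  have e00 := (h 0 0).mpr (by decide)
  have e01 := (h 0 1).mpr (by decide)
  have e11 := (h 1 1).mpr (by decide)
  have e12 := (h 1 2).mpr (by decide)
  have e22 := (h 2 2).mpr (by decide)
  have e23 := (h 2 3).mpr (by decide)
  have e33 := (h 3 3).mpr (by decide)
  have e30 := (h 3 0).mpr (by decide)
  have n02 : ¬ Brel k (x 0) (y 2) := fun hB => absurd ((h 0 2).mp hB) (by decide)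
  have n03 : ¬ Brel k (x 0) (y 3) := fun hB => absurd ((h 0 3).mp hB) (by decide)
  have n10 : ¬ Brel k (x 1) (y 0) := fun hB => absurd ((h 1 0).mp hB) (by decide)
  have n13 : ¬ Brel k (x 1) (y 3) := fun hB => absurd ((h 1 3).mp hB) (by decide)
  have n20 : ¬ Brel k (x 2) (y 0) := fun hB => absurd ((h 2 0).mp hB) (by decide)
  have n21 : ¬ Brel k (x 2) (y 1) := fun hB => absurd ((h 2 1).mp hB) (by decide)
  have n31 : ¬ Brel k (x 3) (y 1) := fun hB => absurd ((h 3 1).mp hB) (by decide)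
  have n32 : ¬ Brel k (x 3) (y 2) := fun hB => absurd ((h 3 2).mp hB) (by decide)
  simp only [Brel] at e00 e01 e11 e12 e22 e23 e33 e30 n02 n03 n10 n13 n20 n21 n31 n32
  omega

lemma stmt13_dilwX (k : ℕ) (hk : 2 ≤ k) : dilwX (Brel k) = k := by
  have hub : ∀ n ∈ {n | ∃ S : Finset (Fin k), XAntichain (Brel k) S ∧ S.card = n}, n ≤ k := by
    rintro n ⟨S, -, rfl⟩
    exact (Finset.card_le_univ S).trans_eq (Finset.card_fin k)
  have hanti : XAntichain (Brel k) (Finset.univ : Finset (Fin k)) := by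
    intro a _ b _ hab hsub
    rcases lt_trichotomy a.val b.val with hlt | heq | hgt
    · have hmem : Brel k a ⟨a.val, by omega⟩ := ⟨le_rfl, Nat.le_add_right _ _⟩
      have := hsub hmem
      simp only [Nb, Brel, Set.mem_setOf_eq, Fin.val_mk] at this
      omega
    · exact hab (Fin.ext heq)
    · have ha := a.isLt
      have hmem : Brel k a ⟨a.val + (k-2), by omega⟩ := ⟨Nat.le_add_right _ _, le_rfl⟩
      have := hsub hmem
      simp only [Nb, Brel, Set.mem_setOf_eq, Fin.val_mk] at this
      omega
  have hmemk : k ∈ {n | ∃ S : Finset (Fin k), XAntichain (Brel k) S ∧ S.card = n} :=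
    ⟨Finset.univ, hanti, Finset.card_fin k⟩
  exact le_antisymm (csSup_le ⟨k, hmemk⟩ hub) (le_csSup ⟨k, hub⟩ hmemk)

lemma stmt13_dilwY (k : ℕ) (hk : 2 ≤ k) : dilwY (Brel k) = 2 := by
  have hub : ∀ n ∈ {n | ∃ S : Finset (Fin (2*k-2)), YAntichain (Brel k) S ∧ S.card = n},
      n ≤ 2 := by
    rintro n ⟨S, hS, rfl⟩
    classical
    have hinj : Set.InjOn (fun j : Fin (2*k-2) => decide (j.val ≤ k-2)) S := by
      intro a ha b hb hfab
      by_contra hab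
      simp only [decide_eq_decide] at hfab
      by_cases hak : a.val ≤ k - 2
      · have hbk : b.val ≤ k - 2 := hfab.mp hak
        rcases le_total a.val b.val with hle | hle
        · refine hS ha hb hab fun i hi => ?_
          simp only [NbY, Brel, Set.mem_setOf_eq] at hi ⊢
          omega
        · refine hS hb ha (Ne.symm hab) fun i hi => ?_
          simp only [NbY, Brel, Set.mem_setOf_eq] at hi ⊢
          omega
      · have hbk : ¬ b.val ≤ k - 2 := fun h => hak (hfab.mpr h)
        rcases le_total a.val b.val with hle | hle
        · refine hS hb ha (Ne.symm hab) fun i hi => ?_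
          have := i.isLt
          simp only [NbY, Brel, Set.mem_setOf_eq] at hi ⊢
          omega
        · refine hS ha hb hab fun i hi => ?_
          have := i.isLt
          simp only [NbY, Brel, Set.mem_setOf_eq] at hi ⊢
          omega
    have := Finset.card_le_card_of_injOn (fun j : Fin (2*k-2) => decide (j.val ≤ k-2))
      (fun a _ => Finset.mem_univ _) hinj
    simpa using this
  have hmem2 : 2 ∈ {n | ∃ S : Finset (Fin (2*k-2)), YAntichain (Brel k) S ∧ S.card = n} := by
    refine ⟨{⟨0, by omega⟩, ⟨2*k-3, by omega⟩}, ?_, ?_⟩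
    · intro a ha b hb hab hsub
      simp only [Finset.coe_insert, Finset.coe_singleton, Set.mem_insert_iff,
        Set.mem_singleton_iff] at ha hb
      rcases ha with rfl | rfl <;> rcases hb with rfl | rfl
      · exact hab rfl
      · have hmem : Brel k ⟨0, by omega⟩ ⟨0, by omega⟩ := by
          simp only [Brel, Fin.val_mk]; omega
        have := hsub hmem
        simp only [NbY, Brel, Set.mem_setOf_eq, Fin.val_mk] at this
        omega
      · have hmem : Brel k ⟨k-1, by omega⟩ ⟨2*k-3, by omega⟩ := by
          simp only [Brel, Fin.val_mk]; omega
        have := hsub hmem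
        simp only [NbY, Brel, Set.mem_setOf_eq, Fin.val_mk] at this
        omega
      · exact hab rfl
    · rw [Finset.card_insert_of_notMem (by simp; omega), Finset.card_singleton]
  exact le_antisymm (csSup_le ⟨2, hmem2⟩ hub) (le_csSup ⟨2, hub⟩ hmem2)

end Stmt13Aux

/-- for every k ≥ 2, B_k is an ACB graph with ∇(X) = k and ∇(Y) = 2. -/
theorem stmt13 (k : ℕ) (hk : 2 ≤ k) :
    ACBGraph (Brel k) ∧ dilwX (Brel k) = k ∧ dilwY (Brel k) = 2 :=
  ⟨⟨stmt13_no3K2 k hk, stmt13_noC6 k hk, stmt13_noC8 k hk⟩,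
    stmt13_dilwX k hk, stmt13_dilwY k hk⟩
end ACB
end

section
/- Let G=(X,Y,E) be an ACB graph (no induced 3K_2, C_6, or C_8) in which the neighborhoods of the vertices of X are pairwise incomparable under inclusion and |X| ≥ 3. Then the maximum number of pairwise incomparable neighborhoods among vertices of Y is exactly 2. -/
namespace ACB

variable {X Y : Type*}

lemma has3K2_of {E : X → Y → Prop} {x1 x2 x3 : X} {y1 y2 y3 : Y}
    (h11 : E x1 y1) (h12 : ¬E x1 y2) (h13 : ¬E x1 y3)
    (h21 : ¬E x2 y1) (h22 : E x2 y2) (h23 : ¬E x2 y3)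
    (h31 : ¬E x3 y1) (h32 : ¬E x3 y2) (h33 : E x3 y3) : Has3K2 E := by
  refine ⟨![x1,x2,x3], ![y1,y2,y3], ?_, ?_, ?_⟩
  · intro i j h; fin_cases i <;> fin_cases j <;> simp_all
  · intro i j h; fin_cases i <;> fin_cases j <;> simp_all
  · intro i j; fin_cases i <;> fin_cases j <;> simp_all

lemma hasC6_of {E : X → Y → Prop} {x1 x2 x3 : X} {y1 y2 y3 : Y}
    (h11 : E x1 y1) (h12 : E x1 y2) (h13 : ¬E x1 y3)
    (h21 : ¬E x2 y1) (h22 : E x2 y2) (h23 : E x2 y3)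
    (h31 : E x3 y1) (h32 : ¬E x3 y2) (h33 : E x3 y3) : HasCycle E 3 := by
  refine ⟨![x1,x2,x3], ![y1,y2,y3], ?_, ?_, ?_⟩
  · intro i j h; fin_cases i <;> fin_cases j <;> simp_all
  · intro i j h; fin_cases i <;> fin_cases j <;> simp_all
  · intro i j; fin_cases i <;> fin_cases j <;> simp_all

lemma hasC8_of {E : X → Y → Prop} {x1 x2 x3 x4 : X} {y1 y2 y3 y4 : Y}
    (h11 : E x1 y1) (h12 : E x1 y2) (h13 : ¬E x1 y3) (h14 : ¬E x1 y4)
    (h21 : ¬E x2 y1) (h22 : E x2 y2) (h23 : E x2 y3) (h24 : ¬E x2 y4)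
    (h31 : ¬E x3 y1) (h32 : ¬E x3 y2) (h33 : E x3 y3) (h34 : E x3 y4)
    (h41 : E x4 y1) (h42 : ¬E x4 y2) (h43 : ¬E x4 y3) (h44 : E x4 y4) : HasCycle E 4 := by
  refine ⟨![x1,x2,x3,x4], ![y1,y2,y3,y4], ?_, ?_, ?_⟩
  · intro i j h; fin_cases i <;> fin_cases j <;> simp_all
  · intro i j h; fin_cases i <;> fin_cases j <;> simp_all
  · intro i j; fin_cases i <;> fin_cases j <;> simp_all

/-- The hard configuration: a=101, b=110, c=010, d=001 w.r.t. (y1,y2,y3). -/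
lemma hard {E : X → Y → Prop}
    (h3 : ¬ Has3K2 E) (h6 : ¬ HasCycle E 3) (h8 : ¬ HasCycle E 4)
    (hXinc : ∀ x x' : X, x ≠ x' → ¬ Nb E x ⊆ Nb E x')
    {y1 y2 y3 : Y} {a b c d : X}
    (ha1 : E a y1) (ha2 : ¬E a y2) (ha3 : E a y3)
    (hb1 : E b y1) (hb2 : E b y2) (hb3 : ¬E b y3)
    (hc1 : ¬E c y1) (hc2 : E c y2) (hc3 : ¬E c y3)
    (hd1 : ¬E d y1) (hd2 : ¬E d y2) (hd3 : E d y3) : False := by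
  have hcb : c ≠ b := fun h => hc1 (h ▸ hb1)
  have hda : d ≠ a := fun h => hd1 (h ▸ ha1)
  obtain ⟨u, hcu, hbu⟩ := Set.not_subset.mp (hXinc c b hcb)
  obtain ⟨v, hdv, hav⟩ := Set.not_subset.mp (hXinc d a hda)
  simp only [Nb, Set.mem_setOf_eq] at hcu hbu hdv hav
  by_cases hγ : E c v
  · by_cases hδ : E d u
    · by_cases hα : E a u
      · exact h6 (hasC6_of hα ha1 ha2 hbu hb1 hb2 hcu hc1 hc2)
      · by_cases hβ : E b v
        · exact h6 (hasC6_of ha3 ha1 hav hb3 hb1 hβ hd3 hd1 hdv)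
        · exact h8 (hasC8_of ha3 ha1 ha2 hα hb3 hb1 hb2 hbu hc3 hc1 hc2 hcu hd3 hd1 hd2 hδ)
    · exact h3 (has3K2_of hb1 hbu hb3 hc1 hcu hc3 hd1 hδ hd3)
  · exact h3 (has3K2_of ha1 ha2 hav hc1 hc2 hγ hd1 hd2 hdv)

lemma prop_step (p100 p010 p001 p110 p101 p011 : Prop)
    (q1 : p100 ∨ p101) (q2 : p010 ∨ p011) (q3 : p100 ∨ p110)
    (q4 : p001 ∨ p011) (q5 : p010 ∨ p110) (q6 : p001 ∨ p101)
    (A : ¬(p100 ∧ p010 ∧ p001)) (B : ¬(p110 ∧ p101 ∧ p011)) :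
    (p101 ∧ p110 ∧ p010 ∧ p001) ∨ (p110 ∧ p011 ∧ p001 ∧ p100) ∨
      (p011 ∧ p101 ∧ p100 ∧ p010) := by tauto

lemma key {E : X → Y → Prop}
    (h3 : ¬ Has3K2 E) (h6 : ¬ HasCycle E 3) (h8 : ¬ HasCycle E 4)
    (hXinc : ∀ x x' : X, x ≠ x' → ¬ Nb E x ⊆ Nb E x')
    {y1 y2 y3 : Y}
    (h12 : ¬ NbY E y1 ⊆ NbY E y2) (h13 : ¬ NbY E y1 ⊆ NbY E y3)
    (h21 : ¬ NbY E y2 ⊆ NbY E y1) (h23 : ¬ NbY E y2 ⊆ NbY E y3)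
    (h31 : ¬ NbY E y3 ⊆ NbY E y1) (h32 : ¬ NbY E y3 ⊆ NbY E y2) : False := by
  set p100 := ∃ x, E x y1 ∧ ¬E x y2 ∧ ¬E x y3 with hp100
  set p010 := ∃ x, ¬E x y1 ∧ E x y2 ∧ ¬E x y3 with hp010
  set p001 := ∃ x, ¬E x y1 ∧ ¬E x y2 ∧ E x y3 with hp001
  set p110 := ∃ x, E x y1 ∧ E x y2 ∧ ¬E x y3 with hp110
  set p101 := ∃ x, E x y1 ∧ ¬E x y2 ∧ E x y3 with hp101
  set p011 := ∃ x, ¬E x y1 ∧ E x y2 ∧ E x y3 with hp011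
  have get : ∀ {z w : Y}, ¬ NbY E z ⊆ NbY E w → ∃ x, E x z ∧ ¬ E x w := by
    intro z w h
    obtain ⟨x, hx1, hx2⟩ := Set.not_subset.mp h
    exact ⟨x, hx1, hx2⟩
  have q1 : p100 ∨ p101 := by
    obtain ⟨x, h1, h2⟩ := get h12
    by_cases h3 : E x y3
    · exact Or.inr ⟨x, h1, h2, h3⟩
    · exact Or.inl ⟨x, h1, h2, h3⟩
  have q2 : p010 ∨ p011 := by
    obtain ⟨x, h1, h2⟩ := get h21
    by_cases h3 : E x y3
    · exact Or.inr ⟨x, h2, h1, h3⟩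
    · exact Or.inl ⟨x, h2, h1, h3⟩
  have q3 : p100 ∨ p110 := by
    obtain ⟨x, h1, h2⟩ := get h13
    by_cases h3 : E x y2
    · exact Or.inr ⟨x, h1, h3, h2⟩
    · exact Or.inl ⟨x, h1, h3, h2⟩
  have q4 : p001 ∨ p011 := by
    obtain ⟨x, h1, h2⟩ := get h31
    by_cases h3 : E x y2
    · exact Or.inr ⟨x, h2, h3, h1⟩
    · exact Or.inl ⟨x, h2, h3, h1⟩
  have q5 : p010 ∨ p110 := by
    obtain ⟨x, h1, h2⟩ := get h23
    by_cases h3 : E x y1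
    · exact Or.inr ⟨x, h3, h1, h2⟩
    · exact Or.inl ⟨x, h3, h1, h2⟩
  have q6 : p001 ∨ p101 := by
    obtain ⟨x, h1, h2⟩ := get h32
    by_cases h3 : E x y1
    · exact Or.inr ⟨x, h3, h2, h1⟩
    · exact Or.inl ⟨x, h3, h2, h1⟩
  have A : ¬(p100 ∧ p010 ∧ p001) := by
    rintro ⟨⟨x1, a1, a2, a3⟩, ⟨x2, b1, b2, b3⟩, ⟨x3, c1, c2, c3⟩⟩
    exact h3 (has3K2_of a1 a2 a3 b1 b2 b3 c1 c2 c3)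
  have B : ¬(p110 ∧ p101 ∧ p011) := by
    rintro ⟨⟨x1, a1, a2, a3⟩, ⟨x2, b1, b2, b3⟩, ⟨x3, c1, c2, c3⟩⟩
    exact h6 (hasC6_of a1 a2 a3 c1 c2 c3 b1 b2 b3)
  rcases prop_step p100 p010 p001 p110 p101 p011 q1 q2 q3 q4 q5 q6 A B with
    ⟨⟨a, a1, a2, a3⟩, ⟨b, b1, b2, b3⟩, ⟨c, c1, c2, c3⟩, ⟨d, d1, d2, d3⟩⟩ |
    ⟨⟨a, a1, a2, a3⟩, ⟨b, b1, b2, b3⟩, ⟨c, c1, c2, c3⟩, ⟨d, d1, d2, d3⟩⟩ |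
    ⟨⟨a, a1, a2, a3⟩, ⟨b, b1, b2, b3⟩, ⟨c, c1, c2, c3⟩, ⟨d, d1, d2, d3⟩⟩
  · exact hard h3 h6 h8 hXinc a1 a2 a3 b1 b2 b3 c1 c2 c3 d1 d2 d3
  · -- set2 {110,011,001,100} w.r.t. (y2,y3,y1): a'=P110,b'=P011,c'=P001,d'=P100
    exact hard h3 h6 h8 hXinc a2 a3 a1 b2 b3 b1 c2 c3 c1 d2 d3 d1
  · -- set3 {011,101,100,010} w.r.t. (y3,y1,y2)
    exact hard h3 h6 h8 hXinc a3 a1 a2 b3 b1 b2 c3 c1 c2 d3 d1 d2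


/-- if G is an ACB graph without isolated vertices, the Y-neighborhoods are
pairwise distinct, the X-neighborhoods are pairwise incomparable, and |X| ≥ 3, then ∇_G(Y) = 2. -/
theorem stmt15 {X Y : Type*} [Fintype X] [Fintype Y] (E : X → Y → Prop)
    (hACB : ACBGraph E)
    (hx : ∀ x, ∃ y, E x y) (hy : ∀ y, ∃ x, E x y)
    (hYdist : ∀ y y' : Y, NbY E y = NbY E y' → y = y')
    (hXinc : ∀ x x' : X, x ≠ x' → ¬ Nb E x ⊆ Nb E x')
    (hX3 : 3 ≤ Fintype.card X) :
    dilwY E = 2 := by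
  classical
  have h3 := hACB.1
  have h6 := hACB.2.1
  have h8 := hACB.2.2
  -- two vertices of X with incomparable neighborhoods give a 2-antichain in Y
  obtain ⟨xa, xb, hxab⟩ := Fintype.exists_pair_of_one_lt_card (α := X) (by omega)
  obtain ⟨ya, hya1, hya2⟩ := Set.not_subset.mp (hXinc xa xb hxab)
  obtain ⟨yb, hyb1, hyb2⟩ := Set.not_subset.mp (hXinc xb xa hxab.symm)
  simp only [Nb, Set.mem_setOf_eq] at hya1 hya2 hyb1 hyb2
  have hyab : ya ≠ yb := fun h => hyb2 (h ▸ hya1)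
  have hmem2 : (2 : ℕ) ∈ {n | ∃ S : Finset Y, YAntichain E S ∧ S.card = n} := by
    refine ⟨{ya, yb}, ?_, Finset.card_pair hyab⟩
    intro p hp q hq hpq
    simp only [Finset.coe_insert, Finset.coe_singleton, Set.mem_insert_iff,
      Set.mem_singleton_iff] at hp hq
    rcases hp with rfl | rfl <;> rcases hq with rfl | rfl
    · exact absurd rfl hpq
    · intro hsub; exact hyb2 (hsub hya1)
    · intro hsub; exact hya2 (hsub hyb1)
    · exact absurd rfl hpq
  have hub : ∀ n ∈ {n | ∃ S : Finset Y, YAntichain E S ∧ S.card = n}, n ≤ 2 := by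
    rintro n ⟨S, hS, rfl⟩
    by_contra hlt
    have h3le : 3 ≤ S.card := by omega
    obtain ⟨T, hTS, hT3⟩ := Finset.exists_subset_card_eq h3le
    obtain ⟨a, b, c, hab, hac, hbc, rfl⟩ := Finset.card_eq_three.mp hT3
    have ha : a ∈ S := hTS (by simp)
    have hb : b ∈ S := hTS (by simp)
    have hc : c ∈ S := hTS (by simp)
    exact key h3 h6 h8 hXinc (hS ha hb hab) (hS ha hc hac) (hS hb ha hab.symm)
      (hS hb hc hbc) (hS hc ha hac.symm) (hS hc hb hbc.symm)
  exact le_antisymm (csSup_le ⟨2, hmem2⟩ hub) (le_csSup ⟨2, hub⟩ hmem2)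
end ACB
end

section
/- Let G=(X,Y,E) be an ACB graph whose Y-neighborhood family {N(y) : y∈Y} has exactly two maximal elements A=N(α) and B=N(β), the vertices of X have pairwise incomparable neighborhoods, and there are no isolated vertices. Then there is no γ∈Y with N(γ) ⊆ A ∩ B. -/
namespace ACB

variable {X Y : Type*}

/-- if G is an ACB graph whose family of Y-neighborhoods has exactly the two
maximal elements A = N(α) and B = N(β), the X-neighborhoods are pairwise incomparable and
there are no isolated vertices, then no γ ∈ Y satisfies N(γ) ⊆ A ∩ B. -/
theorem stmt16 {X Y : Type*} (E : X → Y → Prop)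
    (hACB : ACBGraph E)
    (hx : ∀ x, ∃ y, E x y) (hy : ∀ y, ∃ x, E x y)
    (hXinc : ∀ x x' : X, x ≠ x' → ¬ Nb E x ⊆ Nb E x')
    (α β : Y)
    (hAB : ¬ NbY E α ⊆ NbY E β) (hBA : ¬ NbY E β ⊆ NbY E α)
    (hmax : ∀ y : Y, NbY E y ⊆ NbY E α ∨ NbY E y ⊆ NbY E β) :
    ∀ γ : Y, ¬ NbY E γ ⊆ NbY E α ∩ NbY E β := by
  intro γ hγ
  obtain ⟨x₀, hx₀⟩ := hy γ
  have hx₀AB : E x₀ α ∧ E x₀ β := hγ hx₀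
  obtain ⟨a, haA, haB⟩ : ∃ a, E a α ∧ ¬ E a β := by
    by_contra h; push_neg at h; exact hAB fun z hz => h z hz
  obtain ⟨b, hbB, hbA⟩ : ∃ b, E b β ∧ ¬ E b α := by
    by_contra h; push_neg at h; exact hBA fun z hz => h z hz
  have haγ : ¬ E a γ := fun h => haB (hγ h).2
  have hbγ : ¬ E b γ := fun h => hbA (hγ h).1
  have hax₀ : a ≠ x₀ := fun h => haB (h ▸ hx₀AB.2)
  have hbx₀ : b ≠ x₀ := fun h => hbA (h ▸ hx₀AB.1)
  have hab : a ≠ b := fun h => hbA (h ▸ haA)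
  obtain ⟨y₁, hay₁, hx₀y₁⟩ : ∃ y₁, E a y₁ ∧ ¬ E x₀ y₁ := by
    by_contra h; push_neg at h; exact hXinc a x₀ hax₀ fun z hz => h z hz
  have hby₁ : ¬ E b y₁ := by
    rcases hmax y₁ with h | h
    · exact fun hb => hbA (h hb)
    · exact absurd (h hay₁) haB
  obtain ⟨y₂, hby₂, hx₀y₂⟩ : ∃ y₂, E b y₂ ∧ ¬ E x₀ y₂ := by
    by_contra h; push_neg at h; exact hXinc b x₀ hbx₀ fun z hz => h z hz
  have hay₂ : ¬ E a y₂ := by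
    rcases hmax y₂ with h | h
    · exact absurd (h hby₂) hbA
    · exact fun ha => haB (h ha)
  apply hACB.1
  refine ⟨![x₀, a, b], ![γ, y₁, y₂], ?_, ?_, ?_⟩
  · intro i j hij
    fin_cases i <;> fin_cases j <;> simp_all <;>
      first
      | rfl
      | exact absurd hij.symm hax₀
      | exact absurd hij.symm hbx₀
      | exact absurd hij hab
      | exact absurd hij.symm hab
      | exact absurd hij hax₀
      | exact absurd hij hbx₀
  · have h1 : γ ≠ y₁ := fun h => haγ (h ▸ hay₁)
    have h2 : γ ≠ y₂ := fun h => hbγ (h ▸ hby₂)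
    have h3 : y₁ ≠ y₂ := fun h => hay₂ (h ▸ hay₁)
    intro i j hij
    fin_cases i <;> fin_cases j <;> simp_all
  · intro i j
    fin_cases i <;> fin_cases j <;>
      simp_all [Matrix.cons_val_zero, Matrix.cons_val_one]
end ACB
end

section
/- A bipartite graph G is a k-critical ACB graph if and only if G is isomorphic to B_k. Here G is k-critical if bip-dilw(G)=k and for every vertex v, bip-dilw(G-v) ≤ k-1. -/
set_option linter.unusedSectionVars false
set_option linter.unusedVariables false
set_option maxHeartbeats 1000000


namespace ACB

variable {X Y : Type*}

-- ===== auxiliary machinery =====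

lemma mem_Nb {E : X → Y → Prop} {x : X} {y : Y} : y ∈ Nb E x ↔ E x y := Iff.rfl
lemma mem_NbY {E : X → Y → Prop} {x : X} {y : Y} : x ∈ NbY E y ↔ E x y := Iff.rfl

section dilw
variable [Fintype X] [Fintype Y] (E : X → Y → Prop)

lemma xantichain_empty : XAntichain E (∅ : Finset X) := by
  simp [XAntichain]

lemma le_dilwX {S : Finset X} (h : XAntichain E S) : S.card ≤ dilwX E := by
  apply le_csSup
  · exact ⟨Fintype.card X, by rintro n ⟨T, _, rfl⟩; exact T.card_le_univ⟩
  · exact ⟨S, h, rfl⟩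

lemma dilwX_le {n : ℕ} (h : ∀ S : Finset X, XAntichain E S → S.card ≤ n) :
    dilwX E ≤ n := by
  have hne : {n | ∃ S : Finset X, XAntichain E S ∧ S.card = n}.Nonempty :=
    ⟨0, ∅, xantichain_empty E, Finset.card_empty⟩
  apply csSup_le hne
  rintro m ⟨S, hS, rfl⟩; exact h S hS

lemma dilwX_flip : dilwX (fun (y : Y) (x : X) => E x y) = dilwY E := rfl
lemma dilwY_flip : dilwY (fun (y : Y) (x : X) => E x y) = dilwX E := rfl

lemma bipDilw_flip : bipDilw (fun (y : Y) (x : X) => E x y) = bipDilw E := by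
  show max (dilwY E) (dilwX E) = max (dilwX E) (dilwY E)
  exact max_comm _ _

lemma le_dilwY {S : Finset Y} (h : YAntichain E S) : S.card ≤ dilwY E :=
  le_dilwX (fun y x => E x y) h

lemma dilwY_le {n : ℕ} (h : ∀ S : Finset Y, YAntichain E S → S.card ≤ n) :
    dilwY E ≤ n := dilwX_le (fun y x => E x y) h

end dilw

-- flip lemmas for forbidden subgraphs
lemma has3K2_flip {E : X → Y → Prop} (h : Has3K2 (fun y x => E x y)) : Has3K2 E := by
  obtain ⟨u, w, hu, hw, hadj⟩ := h
  exact ⟨w, u, hw, hu, fun i j => (hadj j i).trans ⟨Eq.symm, Eq.symm⟩⟩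

lemma hasCycle3_flip {E : X → Y → Prop} (h : HasCycle (fun y x => E x y) 3) :
    HasCycle E 3 := by
  obtain ⟨u, w, hu, hw, hadj⟩ := h
  have rev : Fin 3 → Fin 3 := fun i => ⟨(3 - i.val) % 3, by omega⟩
  refine ⟨fun i => w ⟨(3 - i.val) % 3, by omega⟩, fun j => u ⟨(3 - j.val) % 3, by omega⟩,
    ?_, ?_, ?_⟩
  · intro i j hij
    have := hw hij
    have h2 : ((3 - i.val) % 3 : ℕ) = (3 - j.val) % 3 := by
      simpa [Fin.ext_iff] using this
    have hi := i.isLt; have hj := j.isLt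
    exact Fin.ext (by omega)
  · intro i j hij
    have := hu hij
    have h2 : ((3 - i.val) % 3 : ℕ) = (3 - j.val) % 3 := by
      simpa [Fin.ext_iff] using this
    have hi := i.isLt; have hj := j.isLt
    exact Fin.ext (by omega)
  · intro i j
    have key := hadj ⟨(3 - j.val) % 3, by omega⟩ ⟨(3 - i.val) % 3, by omega⟩
    have hidx : ∀ i j : Fin 3, (((3 - i.val) % 3 = (3 - j.val) % 3 ∨
        (3 - i.val) % 3 = ((3 - j.val) % 3 + 1) % 3) ↔
        (j.val = i.val ∨ j.val = (i.val + 1) % 3)) := by decide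
    exact key.trans (hidx i j)

lemma hasCycle4_flip {E : X → Y → Prop} (h : HasCycle (fun y x => E x y) 4) :
    HasCycle E 4 := by
  obtain ⟨u, w, hu, hw, hadj⟩ := h
  refine ⟨fun i => w ⟨(4 - i.val) % 4, by omega⟩, fun j => u ⟨(4 - j.val) % 4, by omega⟩,
    ?_, ?_, ?_⟩
  · intro i j hij
    have := hw hij
    have h2 : ((4 - i.val) % 4 : ℕ) = (4 - j.val) % 4 := by
      simpa [Fin.ext_iff] using this
    have hi := i.isLt; have hj := j.isLt
    exact Fin.ext (by omega)
  · intro i j hij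
    have := hu hij
    have h2 : ((4 - i.val) % 4 : ℕ) = (4 - j.val) % 4 := by
      simpa [Fin.ext_iff] using this
    have hi := i.isLt; have hj := j.isLt
    exact Fin.ext (by omega)
  · intro i j
    have key := hadj ⟨(4 - j.val) % 4, by omega⟩ ⟨(4 - i.val) % 4, by omega⟩
    have hidx : ∀ i j : Fin 4, (((4 - i.val) % 4 = (4 - j.val) % 4 ∨
        (4 - i.val) % 4 = ((4 - j.val) % 4 + 1) % 4) ↔
        (j.val = i.val ∨ j.val = (i.val + 1) % 4)) := by decide
    exact key.trans (hidx i j)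

lemma acb_flip {E : X → Y → Prop} (h : ACBGraph E) : ACBGraph (fun y x => E x y) := by
  obtain ⟨h1, h2, h3⟩ := h
  refine ⟨fun hh => h1 ?_, fun hh => h2 ?_, fun hh => h3 ?_⟩
  · exact has3K2_flip hh
  · exact hasCycle3_flip hh
  · exact hasCycle4_flip hh


lemma inj3 {α : Type*} {a b c : α} (hab : a ≠ b) (hac : a ≠ c) (hbc : b ≠ c) :
    Function.Injective ![a, b, c] := by
  intro i j h
  fin_cases i <;> fin_cases j <;> simp_all

lemma inj4 {α : Type*} {a b c d : α} (hab : a ≠ b) (hac : a ≠ c) (had : a ≠ d)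
    (hbc : b ≠ c) (hbd : b ≠ d) (hcd : c ≠ d) :
    Function.Injective ![a, b, c, d] := by
  intro i j h
  fin_cases i <;> fin_cases j <;> simp_all

lemma no3K2_s17 {E : X → Y → Prop} (h : ¬ Has3K2 E) :
    ∀ a b c : X, a ≠ b → a ≠ c → b ≠ c →
      Nb E a ⊆ Nb E b ∪ Nb E c ∨ Nb E b ⊆ Nb E a ∪ Nb E c ∨ Nb E c ⊆ Nb E a ∪ Nb E b := by
  intro a b c hab hac hbc
  by_contra hcon
  push_neg at hcon
  obtain ⟨h1, h2, h3⟩ := hcon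
  rw [Set.not_subset] at h1 h2 h3
  obtain ⟨u, hu, hu'⟩ := h1
  obtain ⟨v, hv, hv'⟩ := h2
  obtain ⟨w, hw, hw'⟩ := h3
  simp only [Set.mem_union, not_or] at hu' hv' hw'
  have hua : E a u := hu
  have hub : ¬ E b u := hu'.1
  have huc : ¬ E c u := hu'.2
  have hvb : E b v := hv
  have hva : ¬ E a v := hv'.1
  have hvc : ¬ E c v := hv'.2
  have hwc : E c w := hw
  have hwa : ¬ E a w := hw'.1
  have hwb : ¬ E b w := hw'.2
  apply h
  refine ⟨![a, b, c], ![u, v, w], inj3 hab hac hbc, inj3 ?_ ?_ ?_, ?_⟩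
  · intro he; exact hva (he ▸ hua)
  · intro he; exact hwa (he ▸ hua)
  · intro he; exact hwb (he ▸ hvb)
  · intro i j
    fin_cases i <;> fin_cases j <;> simp_all

lemma noC6 {E : X → Y → Prop} (h : ¬ HasCycle E 3) :
    ∀ a b c : X, a ≠ b → a ≠ c → b ≠ c →
      Nb E a ∩ Nb E b ⊆ Nb E c ∨ Nb E b ∩ Nb E c ⊆ Nb E a ∨ Nb E a ∩ Nb E c ⊆ Nb E b := by
  intro a b c hab hac hbc
  by_contra hcon
  push_neg at hcon
  obtain ⟨h1, h2, h3⟩ := hcon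
  rw [Set.not_subset] at h1 h2 h3
  obtain ⟨u, hu, hu'⟩ := h1   -- u ∈ A_a ∩ A_b, u ∉ A_c
  obtain ⟨v, hv, hv'⟩ := h2   -- v ∈ A_b ∩ A_c, v ∉ A_a
  obtain ⟨w, hw, hw'⟩ := h3   -- w ∈ A_a ∩ A_c, w ∉ A_b
  have hua : E a u := hu.1
  have hub : E b u := hu.2
  have huc : ¬ E c u := hu'
  have hvb : E b v := hv.1
  have hvc : E c v := hv.2
  have hva : ¬ E a v := hv'
  have hwa : E a w := hw.1
  have hwc : E c w := hw.2
  have hwb : ¬ E b w := hw'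
  apply h
  refine ⟨![a, b, c], ![w, u, v], inj3 hab hac hbc, inj3 ?_ ?_ ?_, ?_⟩
  · intro he; exact huc (he ▸ hwc)
  · intro he; exact hva (he ▸ hwa)
  · intro he; exact hva (he ▸ hua)
  · intro i j
    fin_cases i <;> fin_cases j <;> simp_all

lemma noC8 {E : X → Y → Prop} (h : ¬ HasCycle E 4) :
    ∀ a b c d : X, a ≠ b → a ≠ c → a ≠ d → b ≠ c → b ≠ d → c ≠ d →
      Nb E a ∩ Nb E b ⊆ Nb E c ∪ Nb E d ∨ Nb E b ∩ Nb E c ⊆ Nb E d ∪ Nb E a ∨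
      Nb E c ∩ Nb E d ⊆ Nb E a ∪ Nb E b ∨ Nb E d ∩ Nb E a ⊆ Nb E b ∪ Nb E c := by
  intro a b c d hab hac had hbc hbd hcd
  by_contra hcon
  push_neg at hcon
  obtain ⟨h1, h2, h3, h4⟩ := hcon
  rw [Set.not_subset] at h1 h2 h3 h4
  obtain ⟨u1, hu1, hu1'⟩ := h1
  obtain ⟨u2, hu2, hu2'⟩ := h2
  obtain ⟨u3, hu3, hu3'⟩ := h3
  obtain ⟨u4, hu4, hu4'⟩ := h4
  simp only [Set.mem_union, not_or] at hu1' hu2' hu3' hu4'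
  have h1a : E a u1 := hu1.1
  have h1b : E b u1 := hu1.2
  have h1c : ¬ E c u1 := hu1'.1
  have h1d : ¬ E d u1 := hu1'.2
  have h2b : E b u2 := hu2.1
  have h2c : E c u2 := hu2.2
  have h2d : ¬ E d u2 := hu2'.1
  have h2a : ¬ E a u2 := hu2'.2
  have h3c : E c u3 := hu3.1
  have h3d : E d u3 := hu3.2
  have h3a : ¬ E a u3 := hu3'.1
  have h3b : ¬ E b u3 := hu3'.2
  have h4d : E d u4 := hu4.1
  have h4a : E a u4 := hu4.2
  have h4b : ¬ E b u4 := hu4'.1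
  have h4c : ¬ E c u4 := hu4'.2
  apply h
  -- y_j ~ x_j, x_{j-1}: y_0 ~ x_3,x_0 = d,a : u4 ; y_1 ~ a,b : u1 ; y_2 ~ b,c : u2 ; y_3 ~ c,d : u3
  refine ⟨![a, b, c, d], ![u4, u1, u2, u3], inj4 hab hac had hbc hbd hcd,
    inj4 ?_ ?_ ?_ ?_ ?_ ?_, ?_⟩
  · intro he; exact h4b (he ▸ h1b)
  · intro he; exact h2a (he ▸ h4a)
  · intro he; exact h3a (he ▸ h4a)
  · intro he; exact h1c (he ▸ h2c)
  · intro he; exact h3b (he ▸ h1b)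
  · intro he; exact h2d (he ▸ h3d)
  · intro i j
    fin_cases i <;> fin_cases j <;> simp_all


lemma downclosed {n : ℕ} (t : Finset (Fin n)) (hdc : ∀ a b : Fin n, a ∈ t → b ≤ a → b ∈ t)
    (a : Fin n) : a ∈ t ↔ a.val < t.card := by
  constructor
  · intro ha
    have h1 : Finset.Iic a ⊆ t := fun b hb => hdc a b ha (Finset.mem_Iic.mp hb)
    have h2 := Finset.card_le_card h1
    rw [Fin.card_Iic] at h2
    omega
  · intro h
    by_contra ha
    have h1 : t ⊆ Finset.Iio a := by
      intro b hb
      rw [Finset.mem_Iio]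
      rcases lt_or_ge b a with h' | h'
      · exact h'
      · exact absurd (hdc b a hb h') ha
    have h2 := Finset.card_le_card h1
    rw [Fin.card_Iio] at h2
    omega

lemma upclosed {n : ℕ} (t : Finset (Fin n)) (huc : ∀ a b : Fin n, a ∈ t → a ≤ b → b ∈ t)
    (a : Fin n) : a ∈ t ↔ n - t.card ≤ a.val := by
  have hcb : t.card ≤ n := by
    simpa using Finset.card_le_univ t
  have halt := a.isLt
  constructor
  · intro ha
    have h1 : Finset.Ici a ⊆ t := fun b hb => huc a b ha (Finset.mem_Ici.mp hb)
    have h2 := Finset.card_le_card h1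
    rw [Fin.card_Ici] at h2
    omega
  · intro h
    by_contra ha
    have h1 : t ⊆ Finset.Ioi a := by
      intro b hb
      rw [Finset.mem_Ioi]
      rcases lt_or_ge a b with h' | h'
      · exact h'
      · exact absurd (huc b a hb h') ha
    have h2 := Finset.card_le_card h1
    rw [Fin.card_Ioi] at h2
    omega

theorem core_s17 {X Y : Type*} [Fintype X] [Fintype Y] (k : ℕ) (hk : 2 ≤ k) (E : X → Y → Prop)
    (hX : Fintype.card X = k)
    (P1 : ∀ a b : X, a ≠ b → ¬ Nb E a ⊆ Nb E b)
    (P2 : ∀ y : Y, ∃ a b : X, a ≠ b ∧ Nb E a \ Nb E b = {y})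
    (h3 : ∀ a b c : X, a ≠ b → a ≠ c → b ≠ c →
      Nb E a ⊆ Nb E b ∪ Nb E c ∨ Nb E b ⊆ Nb E a ∪ Nb E c ∨ Nb E c ⊆ Nb E a ∪ Nb E b)
    (h6 : ∀ a b c : X, a ≠ b → a ≠ c → b ≠ c →
      Nb E a ∩ Nb E b ⊆ Nb E c ∨ Nb E b ∩ Nb E c ⊆ Nb E a ∨ Nb E a ∩ Nb E c ⊆ Nb E b)
    (h8 : ∀ a b c d : X, a ≠ b → a ≠ c → a ≠ d → b ≠ c → b ≠ d → c ≠ d →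
      Nb E a ∩ Nb E b ⊆ Nb E c ∪ Nb E d ∨ Nb E b ∩ Nb E c ⊆ Nb E d ∪ Nb E a ∨
      Nb E c ∩ Nb E d ⊆ Nb E a ∪ Nb E b ∨ Nb E d ∩ Nb E a ⊆ Nb E b ∪ Nb E c) :
    ∃ (f : X ≃ Fin k) (g : Y ≃ Fin (2*k-2)), ∀ x y, E x y ↔ Brel k (f x) (g y) := by
  classical
  -- ============ Step A : a disjoint pair exists ============
  have hc2 : 1 < Fintype.card X := by omega
  obtain ⟨p0, q0, hpq0⟩ := Fintype.exists_pair_of_one_lt_card hc2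
  have hTne : (Finset.univ.filter (fun pq : X × X => pq.1 ≠ pq.2)).Nonempty :=
    ⟨(p0, q0), by simp [hpq0]⟩
  obtain ⟨⟨p, q⟩, hpqT, hmin⟩ := Finset.exists_min_image _
    (fun pq : X × X => (Nb E pq.1 ∩ Nb E pq.2).ncard) hTne
  have hpq : p ≠ q := by simpa using hpqT
  have hmin' : ∀ a b : X, a ≠ b →
      (Nb E p ∩ Nb E q).ncard ≤ (Nb E a ∩ Nb E b).ncard := by
    intro a b hab
    exact hmin (a, b) (by simp [hab])
  -- every vertex's nbhd contains the min intersection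
  have hmid : ∀ c : X, Nb E p ∩ Nb E q ⊆ Nb E c := by
    intro c
    by_contra hcon
    rw [Set.not_subset] at hcon
    obtain ⟨y, hy, hyc⟩ := hcon
    have hcp : c ≠ p := fun h => hyc (h ▸ hy.1)
    have hcq : c ≠ q := fun h => hyc (h ▸ hy.2)
    rcases h6 p q c hpq (Ne.symm hcp) (Ne.symm hcq) with h' | h' | h'
    · exact hyc (h' hy)
    · -- Nb q ∩ Nb c ⊆ Nb p
      have hsub : Nb E q ∩ Nb E c ⊆ Nb E p ∩ Nb E q := fun z hz => ⟨h' hz, hz.1⟩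
      have hle := hmin' q c (Ne.symm hcq)
      have heq := Set.eq_of_subset_of_ncard_le hsub
        (le_trans hle (by rw [Set.inter_comm]))
      -- heq : Nb q ∩ Nb c = Nb p ∩ Nb q
      have : y ∈ Nb E q ∩ Nb E c := heq ▸ (by rw [Set.inter_comm] at hy ⊢; exact hy)
      exact hyc this.2
    · -- Nb p ∩ Nb c ⊆ Nb q
      have hsub : Nb E p ∩ Nb E c ⊆ Nb E p ∩ Nb E q := fun z hz => ⟨hz.1, h' hz⟩
      have hle := hmin' p c (Ne.symm hcp)
      have heq := Set.eq_of_subset_of_ncard_le hsub hle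
      have : y ∈ Nb E p ∩ Nb E c := heq ▸ hy
      exact hyc this.2
  have hdisj : Nb E p ∩ Nb E q = ∅ := by
    by_contra hne
    obtain ⟨y, hy⟩ := Set.nonempty_iff_ne_empty.mpr hne
    obtain ⟨a, b, hab, hd⟩ := P2 y
    have hyb : y ∉ Nb E b := by
      have : y ∈ Nb E a \ Nb E b := by rw [hd]; rfl
      exact this.2
    exact hyb (hmid b hy)
  -- ============ Step B ============
  have hcov : ∀ c : X, Nb E c ⊆ Nb E p ∪ Nb E q := by
    intro c
    by_cases hcp : c = p
    · exact hcp ▸ fun z hz => Or.inl hz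
    by_cases hcq : c = q
    · exact hcq ▸ fun z hz => Or.inr hz
    rcases h3 p q c hpq (Ne.symm hcp) (Ne.symm hcq) with h' | h' | h'
    · exfalso
      apply P1 p c (Ne.symm hcp)
      intro z hz
      rcases h' hz with h'' | h''
      · exact absurd (Set.mem_inter hz h'') (by rw [hdisj]; simp)
      · exact h''
    · exfalso
      apply P1 q c (Ne.symm hcq)
      intro z hz
      rcases h' hz with h'' | h''
      · exact absurd (Set.mem_inter h'' hz) (by rw [hdisj]; simp)
      · exact h''
    · exact h'
  -- nonempty side-traces
  have hLne : ∀ c : X, c ≠ q → (Nb E c ∩ Nb E p).Nonempty := by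
    intro c hcq
    by_cases hcp : c = p
    · subst hcp
      obtain ⟨y, hy, _⟩ := Set.not_subset.mp (P1 c q hcq)
      exact ⟨y, hy, hy⟩
    · by_contra hemp
      rw [Set.not_nonempty_iff_eq_empty] at hemp
      apply P1 c q hcq
      intro z hz
      rcases hcov c hz with h' | h'
      · exact absurd (Set.mem_inter hz h') (by rw [hemp]; simp)
      · exact h'
  have hRne : ∀ c : X, c ≠ p → (Nb E c ∩ Nb E q).Nonempty := by
    intro c hcp
    by_cases hcq : c = q
    · subst hcq
      obtain ⟨y, hy, _⟩ := Set.not_subset.mp (P1 c p hcp)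
      exact ⟨y, hy, hy⟩
    · by_contra hemp
      rw [Set.not_nonempty_iff_eq_empty] at hemp
      apply P1 c p hcp
      intro z hz
      rcases hcov c hz with h' | h'
      · exact h'
      · exact absurd (Set.mem_inter hz h') (by rw [hemp]; simp)
  -- uniqueness of the disjoint pair
  have huniq : ∀ a b : X, a ≠ b → Nb E a ∩ Nb E b = ∅ →
      (a = p ∧ b = q) ∨ (a = q ∧ b = p) := by
    intro a b hab hd
    have hdab : ∀ z : Y, z ∈ Nb E a → z ∈ Nb E b → False := by
      intro z h1 h2
      have : z ∈ Nb E a ∩ Nb E b := ⟨h1, h2⟩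
      rw [hd] at this; exact this
    have hdpq : ∀ z : Y, z ∈ Nb E p → z ∈ Nb E q → False := by
      intro z h1 h2
      have : z ∈ Nb E p ∩ Nb E q := ⟨h1, h2⟩
      rw [hdisj] at this; exact this
    by_cases hap : a = p
    · by_cases hbq : b = q
      · exact Or.inl ⟨hap, hbq⟩
      · exfalso
        obtain ⟨y, hy⟩ := hLne b hbq
        exact hdab y (hap ▸ hy.2) hy.1
    by_cases haq : a = q
    · by_cases hbp : b = p
      · exact Or.inr ⟨haq, hbp⟩
      · exfalso
        obtain ⟨y, hy⟩ := hRne b hbp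
        exact hdab y (haq ▸ hy.2) hy.1
    by_cases hbp : b = p
    · exfalso
      obtain ⟨y, hy⟩ := hLne a haq
      exact hdab y hy.1 (hbp ▸ hy.2)
    by_cases hbq : b = q
    · exfalso
      obtain ⟨y, hy⟩ := hRne a hap
      exact hdab y hy.1 (hbq ▸ hy.2)
    -- all four of p a q b distinct : use C8-freeness
    exfalso
    have e1 : (Nb E p ∩ Nb E a).Nonempty := by
      obtain ⟨y, hy⟩ := hLne a haq; exact ⟨y, hy.2, hy.1⟩
    have e2 : (Nb E a ∩ Nb E q).Nonempty := hRne a hap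
    have e3 : (Nb E q ∩ Nb E b).Nonempty := by
      obtain ⟨y, hy⟩ := hRne b hbp; exact ⟨y, hy.2, hy.1⟩
    have e4 : (Nb E b ∩ Nb E p).Nonempty := hLne b hbq
    rcases h8 p a q b (fun h => hap h.symm) hpq (fun h => hbp h.symm)
      (fun h => haq h) hab (fun h => hbq h.symm) with h' | h' | h' | h'
    · obtain ⟨z, hz⟩ := e1
      rcases h' hz with h'' | h''
      · exact hdpq z hz.1 h''
      · exact hdab z hz.2 h''
    · obtain ⟨z, hz⟩ := e2
      rcases h' hz with h'' | h''
      · exact hdab z hz.1 h''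
      · exact hdpq z h'' hz.2
    · obtain ⟨z, hz⟩ := e3
      rcases h' hz with h'' | h''
      · exact hdpq z h'' hz.1
      · exact hdab z h'' hz.2
    · obtain ⟨z, hz⟩ := e4
      rcases h' hz with h'' | h''
      · exact hdab z h'' hz.1
      · exact hdpq z hz.2 h''
  -- ============ Step C : chains ============
  set L : X → Set Y := fun c => Nb E c ∩ Nb E p with hLdef
  set R : X → Set Y := fun c => Nb E c ∩ Nb E q with hRdef
  have hdpq : ∀ z : Y, z ∈ Nb E p → z ∈ Nb E q → False := by
    intro z h1 h2
    have : z ∈ Nb E p ∩ Nb E q := ⟨h1, h2⟩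
    rw [hdisj] at this; exact this
  have hsplit : ∀ (c : X) (z : Y), E c z ↔ (z ∈ L c ∨ z ∈ R c) := by
    intro c z
    constructor
    · intro hz
      rcases hcov c hz with h' | h'
      · exact Or.inl ⟨hz, h'⟩
      · exact Or.inr ⟨hz, h'⟩
    · intro hz
      rcases hz with h' | h' <;> exact h'.1
  have hLsub : ∀ c, L c ⊆ Nb E p := fun c z hz => hz.2
  have hRsub : ∀ c, R c ⊆ Nb E q := fun c z hz => hz.2
  have hLchain : ∀ a b : X, L a ⊆ L b ∨ L b ⊆ L a := by
    intro a b
    by_cases hab : a = b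
    · exact Or.inl (hab ▸ Set.Subset.refl _)
    by_cases hbp : b = p
    · exact Or.inl (by rw [hbp]; exact fun z hz => ⟨hz.2, hz.2⟩)
    by_cases hap : a = p
    · exact Or.inr (by rw [hap]; exact fun z hz => ⟨hz.2, hz.2⟩)
    by_cases haq : a = q
    · refine Or.inl ?_
      rw [haq]
      intro z hz
      exact absurd (Set.mem_inter hz.2 hz.1) (by rw [hdisj]; simp)
    by_cases hbq : b = q
    · refine Or.inr ?_
      rw [hbq]
      intro z hz
      exact absurd (Set.mem_inter hz.2 hz.1) (by rw [hdisj]; simp)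
    by_contra hcon
    rcases not_or.mp hcon with ⟨hc1, hc2⟩
    obtain ⟨y, hy, hy'⟩ := Set.not_subset.mp hc1
    obtain ⟨y', hym, hym'⟩ := Set.not_subset.mp hc2
    have hynb : y ∉ Nb E b := fun h => hy' ⟨h, hy.2⟩
    have hynb' : y' ∉ Nb E a := fun h => hym' ⟨h, hym.2⟩
    have hstep1 : Nb E a ∩ Nb E b ⊆ Nb E p := by
      rcases h6 a b p hab hap hbp with h' | h' | h'
      · exact h'
      · exact absurd (h' ⟨hym.1, hym.2⟩) hynb'
      · exact absurd (h' ⟨hy.1, hy.2⟩) hynb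
    have hRaRb : ∀ z : Y, z ∈ R a → z ∈ R b → False := by
      intro z hza hzb
      exact hdpq z (hstep1 ⟨hza.1, hzb.1⟩) hza.2
    rcases h6 a b q hab haq hbq with h' | h' | h'
    · have : Nb E a ∩ Nb E b = ∅ := by
        ext z
        simp only [Set.mem_inter_iff, Set.mem_empty_iff_false, iff_false, not_and]
        intro hza hzb
        exact absurd (hdpq z (hstep1 ⟨hza, hzb⟩) (h' ⟨hza, hzb⟩)) not_false
      rcases huniq a b hab this with ⟨h1, _⟩ | ⟨h1, _⟩
      · exact hap h1
      · exact haq h1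
    · obtain ⟨z, hz⟩ := hRne b hbp
      exact hRaRb z ⟨h' ⟨hz.1, hz.2⟩, hz.2⟩ hz
    · obtain ⟨z, hz⟩ := hRne a hap
      exact hRaRb z hz ⟨h' ⟨hz.1, hz.2⟩, hz.2⟩
  have hRchain : ∀ a b : X, R a ⊆ R b ∨ R b ⊆ R a := by
    intro a b
    by_cases hab : a = b
    · exact Or.inl (hab ▸ Set.Subset.refl _)
    by_cases hbq : b = q
    · exact Or.inl (by rw [hbq]; exact fun z hz => ⟨hz.2, hz.2⟩)
    by_cases haq : a = q
    · exact Or.inr (by rw [haq]; exact fun z hz => ⟨hz.2, hz.2⟩)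
    by_cases hap : a = p
    · refine Or.inl ?_
      rw [hap]
      intro z hz
      exact absurd (Set.mem_inter hz.1 hz.2) (by rw [hdisj]; simp)
    by_cases hbp : b = p
    · refine Or.inr ?_
      rw [hbp]
      intro z hz
      exact absurd (Set.mem_inter hz.1 hz.2) (by rw [hdisj]; simp)
    by_contra hcon
    rcases not_or.mp hcon with ⟨hc1, hc2⟩
    obtain ⟨y, hy, hy'⟩ := Set.not_subset.mp hc1
    obtain ⟨y', hym, hym'⟩ := Set.not_subset.mp hc2
    have hynb : y ∉ Nb E b := fun h => hy' ⟨h, hy.2⟩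
    have hynb' : y' ∉ Nb E a := fun h => hym' ⟨h, hym.2⟩
    have hstep1 : Nb E a ∩ Nb E b ⊆ Nb E q := by
      rcases h6 a b q hab haq hbq with h' | h' | h'
      · exact h'
      · exact absurd (h' ⟨hym.1, hym.2⟩) hynb'
      · exact absurd (h' ⟨hy.1, hy.2⟩) hynb
    have hLaLb : ∀ z : Y, z ∈ L a → z ∈ L b → False := by
      intro z hza hzb
      exact hdpq z hza.2 (hstep1 ⟨hza.1, hzb.1⟩)
    rcases h6 a b p hab hap hbp with h' | h' | h'
    · have : Nb E a ∩ Nb E b = ∅ := by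
        ext z
        simp only [Set.mem_inter_iff, Set.mem_empty_iff_false, iff_false, not_and]
        intro hza hzb
        exact absurd (hdpq z (h' ⟨hza, hzb⟩) (hstep1 ⟨hza, hzb⟩)) not_false
      rcases huniq a b hab this with ⟨h1, _⟩ | ⟨h1, _⟩
      · exact hap h1
      · exact haq h1
    · obtain ⟨z, hz⟩ := hLne b hbq
      exact hLaLb z ⟨h' ⟨hz.1, hz.2⟩, hz.2⟩ hz
    · obtain ⟨z, hz⟩ := hLne a haq
      exact hLaLb z hz ⟨h' ⟨hz.1, hz.2⟩, hz.2⟩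
  have hLinj : ∀ a b : X, a ≠ b → L a = L b → False := by
    intro a b hab he
    rcases hRchain a b with h' | h'
    · apply P1 a b hab
      intro z hz
      rcases (hsplit a z).mp hz with h'' | h''
      · exact (hsplit b z).mpr (Or.inl (he ▸ h''))
      · exact (hsplit b z).mpr (Or.inr (h' h''))
    · apply P1 b a (Ne.symm hab)
      intro z hz
      rcases (hsplit b z).mp hz with h'' | h''
      · exact (hsplit a z).mpr (Or.inl (he ▸ h''))
      · exact (hsplit a z).mpr (Or.inr (h' h''))
  have hRinj : ∀ a b : X, a ≠ b → R a = R b → False := by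
    intro a b hab he
    rcases hLchain a b with h' | h'
    · apply P1 a b hab
      intro z hz
      rcases (hsplit a z).mp hz with h'' | h''
      · exact (hsplit b z).mpr (Or.inl (h' h''))
      · exact (hsplit b z).mpr (Or.inr (he ▸ h''))
    · apply P1 b a (Ne.symm hab)
      intro z hz
      rcases (hsplit b z).mp hz with h'' | h''
      · exact (hsplit a z).mpr (Or.inl (h' h''))
      · exact (hsplit a z).mpr (Or.inr (he ▸ h''))
  have hLR : ∀ a b : X, a ≠ b → L a ⊆ L b → R b ⊆ R a := by
    intro a b hab h
    rcases hRchain b a with h' | h'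
    · exact h'
    · exfalso
      apply P1 a b hab
      intro z hz
      rcases (hsplit a z).mp hz with h'' | h''
      · exact (hsplit b z).mpr (Or.inl (h h''))
      · exact (hsplit b z).mpr (Or.inr (h' h''))
  have hRL : ∀ a b : X, a ≠ b → R a ⊆ R b → L b ⊆ L a := by
    intro a b hab h
    rcases hLchain b a with h' | h'
    · exact h'
    · exfalso
      apply P1 a b hab
      intro z hz
      rcases (hsplit a z).mp hz with h'' | h''
      · exact (hsplit b z).mpr (Or.inl (h' h''))
      · exact (hsplit b z).mpr (Or.inr (h h''))
  have hLRiff : ∀ a b : X, (L b ⊆ L a ↔ R a ⊆ R b) := by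
    intro a b
    by_cases hab : a = b
    · rw [hab]
      exact iff_of_true (Set.Subset.refl _) (Set.Subset.refl _)
    constructor
    · intro h; exact hLR b a (Ne.symm hab) h
    · intro h; exact hRL a b hab h
  -- ============ Step D : rank ============
  set ρ : X → ℕ := fun c => (Finset.univ.filter (fun b => L c ⊂ L b)).card with hρdef
  have hmono : ∀ a b : X, L b ⊂ L a → ρ a < ρ b := by
    intro a b hba
    apply Finset.card_lt_card
    rw [Finset.ssubset_iff_of_subset]
    · exact ⟨a, by simp only [Finset.mem_filter, Finset.mem_univ, true_and]; exact ⟨hba, fun h => h.2 (le_of_lt h)⟩⟩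
    · intro c hc
      simp only [Finset.mem_filter, Finset.mem_univ, true_and] at hc ⊢
      exact hba.trans hc
  have htri : ∀ a b : X, a ≠ b → L a ⊂ L b ∨ L b ⊂ L a := by
    intro a b hab
    rcases hLchain a b with h' | h'
    · exact Or.inl (ssubset_of_subset_of_ne h' (fun he => hLinj a b hab he))
    · exact Or.inr (ssubset_of_subset_of_ne h' (fun he => hLinj b a (Ne.symm hab) he))
  have hρlt : ∀ a b : X, ρ a < ρ b ↔ L b ⊂ L a := by
    intro a b
    constructor
    · intro h
      have hab : a ≠ b := fun he => by rw [he] at h; omega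
      rcases htri a b hab with h' | h'
      · exact absurd (hmono b a h') (by omega)
      · exact h'
    · exact hmono a b
  have hρle : ∀ a b : X, ρ a ≤ ρ b ↔ L b ⊆ L a := by
    intro a b
    constructor
    · intro h
      by_cases hab : a = b
      · rw [hab]
      rcases htri a b hab with h' | h'
      · exact absurd (hmono b a h') (by omega)
      · exact h'.subset
    · intro h
      by_cases hab : a = b
      · rw [hab]
      exact le_of_lt ((hρlt a b).mpr (ssubset_of_subset_of_ne h (fun he => hLinj b a (Ne.symm hab) he)))
  have hρleR : ∀ a b : X, ρ a ≤ ρ b ↔ R a ⊆ R b := by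
    intro a b
    exact (hρle a b).trans (hLRiff a b)
  have hρltR : ∀ a b : X, ρ a < ρ b ↔ R a ⊂ R b := by
    intro a b
    constructor
    · intro h
      refine ssubset_of_subset_of_ne ((hρleR a b).mp (le_of_lt h)) ?_
      intro he
      exact hRinj a b (fun hab => by rw [hab] at h; omega) he
    · intro h
      rcases lt_or_ge (ρ a) (ρ b) with h' | h'
      · exact h'
      · exact absurd ((hρleR b a).mp h') (fun hc => h.2 hc)
  have hρbound : ∀ c : X, ρ c < k := by
    intro c
    have h1 : (Finset.univ.filter (fun b => L c ⊂ L b)) ⊆ Finset.univ.erase c := by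
      intro b hb
      simp only [Finset.mem_filter, Finset.mem_univ, true_and] at hb
      exact Finset.mem_erase.mpr ⟨fun he => hb.2 (le_of_eq (congrArg L he.symm).symm), Finset.mem_univ b⟩
    have h2 := Finset.card_le_card h1
    have h4 : (Finset.univ.erase c).card = k - 1 := by
      rw [Finset.card_erase_of_mem (Finset.mem_univ c), Finset.card_univ, hX]
    show (Finset.univ.filter (fun b => L c ⊂ L b)).card < k
    omega
  set f : X → Fin k := fun c => ⟨ρ c, hρbound c⟩ with hfdef
  have hfinj : Function.Injective f := by
    intro a b h
    by_contra hab
    have hv : ρ a = ρ b := congrArg Fin.val h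
    rcases htri a b hab with h' | h'
    · have := hmono b a h'; omega
    · have := hmono a b h'; omega
  have hfbij : Function.Bijective f := by
    rw [Fintype.bijective_iff_injective_and_card]
    exact ⟨hfinj, by simp [hX]⟩
  have hρsurj : ∀ n : ℕ, n < k → ∃ c : X, ρ c = n := by
    intro n hn
    obtain ⟨c, hc⟩ := hfbij.2 ⟨n, hn⟩
    exact ⟨c, congrArg Fin.val hc⟩
  -- ============ Step E : membership counting ============
  set dL : Y → ℕ := fun y => (Finset.univ.filter (fun b => y ∈ L b)).card with hdLdef
  set dR : Y → ℕ := fun y => (Finset.univ.filter (fun b => y ∈ R b)).card with hdRdef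
  have hdownL : ∀ (y : Y), ∀ c : X, (y ∈ L c ↔ ρ c < dL y) := by
    intro y c
    set s := Finset.univ.filter (fun b => y ∈ L b) with hsdef
    set t := s.image f with htdef
    have hcard : t.card = s.card := Finset.card_image_of_injective _ hfinj
    have hdc : ∀ u v : Fin k, u ∈ t → v ≤ u → v ∈ t := by
      intro u v hu hvu
      obtain ⟨cu, hcu, hcueq⟩ := Finset.mem_image.mp hu
      obtain ⟨cv, hcveq⟩ := hfbij.2 v
      refine Finset.mem_image.mpr ⟨cv, ?_, hcveq⟩
      have hle : ρ cv ≤ ρ cu := by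
        have h1 : v.val = ρ cv := by rw [← hcveq]
        have h2 : u.val = ρ cu := by rw [← hcueq]
        have := (Fin.le_def.mp hvu)
        omega
      have hsub : L cu ⊆ L cv := (hρle cv cu).mp hle
      simp only [hsdef, Finset.mem_filter, Finset.mem_univ, true_and] at hcu ⊢
      exact hsub hcu
    have key := downclosed t hdc (f c)
    have hmem : f c ∈ t ↔ c ∈ s := Function.Injective.mem_finset_image hfinj
    have hcs : c ∈ s ↔ y ∈ L c := by
      simp only [hsdef, Finset.mem_filter, Finset.mem_univ, true_and]
    rw [← hcs, ← hmem, key, hcard]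
  have hupR : ∀ (y : Y), ∀ c : X, (y ∈ R c ↔ k - dR y ≤ ρ c) := by
    intro y c
    set s := Finset.univ.filter (fun b => y ∈ R b) with hsdef
    set t := s.image f with htdef
    have hcard : t.card = s.card := Finset.card_image_of_injective _ hfinj
    have huc : ∀ u v : Fin k, u ∈ t → u ≤ v → v ∈ t := by
      intro u v hu hvu
      obtain ⟨cu, hcu, hcueq⟩ := Finset.mem_image.mp hu
      obtain ⟨cv, hcveq⟩ := hfbij.2 v
      refine Finset.mem_image.mpr ⟨cv, ?_, hcveq⟩
      have hle : ρ cu ≤ ρ cv := by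
        have h1 : v.val = ρ cv := by rw [← hcveq]
        have h2 : u.val = ρ cu := by rw [← hcueq]
        have := (Fin.le_def.mp hvu)
        omega
      have hsub : R cu ⊆ R cv := (hρleR cu cv).mp hle
      simp only [hsdef, Finset.mem_filter, Finset.mem_univ, true_and] at hcu ⊢
      exact hsub hcu
    have key := upclosed t huc (f c)
    have hmem : f c ∈ t ↔ c ∈ s := Function.Injective.mem_finset_image hfinj
    have hcs : c ∈ s ↔ y ∈ R c := by
      simp only [hsdef, Finset.mem_filter, Finset.mem_univ, true_and]
    rw [← hcs, ← hmem, key, hcard]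
  have hYcov : ∀ y : Y, y ∈ Nb E p ∨ y ∈ Nb E q := by
    intro y
    obtain ⟨a, b, hab, hd⟩ := P2 y
    have hya : y ∈ Nb E a := by
      have : y ∈ Nb E a \ Nb E b := by rw [hd]; rfl
      exact this.1
    exact hcov a hya
  have hdL1 : ∀ y : Y, y ∈ Nb E p → 1 ≤ dL y ∧ dL y ≤ k - 1 := by
    intro y hyp
    constructor
    · have : p ∈ Finset.univ.filter (fun b => y ∈ L b) := by
        simp only [Finset.mem_filter, Finset.mem_univ, true_and]
        exact ⟨hyp, hyp⟩
      have := Finset.card_pos.mpr ⟨p, this⟩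
      show 1 ≤ (Finset.univ.filter (fun b => y ∈ L b)).card
      omega
    · show (Finset.univ.filter (fun b => y ∈ L b)).card ≤ k - 1
      have h1 : (Finset.univ.filter (fun b => y ∈ L b)) ⊆ Finset.univ.erase q := by
        intro b hb
        simp only [Finset.mem_filter, Finset.mem_univ, true_and] at hb
        refine Finset.mem_erase.mpr ⟨?_, Finset.mem_univ b⟩
        intro he
        rw [he] at hb
        exact hdpq y hb.2 hb.1
      have h2 := Finset.card_le_card h1
      have h4 : (Finset.univ.erase q).card = k - 1 := by
        rw [Finset.card_erase_of_mem (Finset.mem_univ q), Finset.card_univ, hX]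
      omega
  have hdR1 : ∀ y : Y, y ∈ Nb E q → 1 ≤ dR y ∧ dR y ≤ k - 1 := by
    intro y hyq
    constructor
    · have : q ∈ Finset.univ.filter (fun b => y ∈ R b) := by
        simp only [Finset.mem_filter, Finset.mem_univ, true_and]
        exact ⟨hyq, hyq⟩
      have := Finset.card_pos.mpr ⟨q, this⟩
      show 1 ≤ (Finset.univ.filter (fun b => y ∈ R b)).card
      omega
    · show (Finset.univ.filter (fun b => y ∈ R b)).card ≤ k - 1
      have h1 : (Finset.univ.filter (fun b => y ∈ R b)) ⊆ Finset.univ.erase p := by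
        intro b hb
        simp only [Finset.mem_filter, Finset.mem_univ, true_and] at hb
        refine Finset.mem_erase.mpr ⟨?_, Finset.mem_univ b⟩
        intro he
        rw [he] at hb
        exact hdpq y hb.1 hb.2
      have h2 := Finset.card_le_card h1
      have h4 : (Finset.univ.erase p).card = k - 1 := by
        rw [Finset.card_erase_of_mem (Finset.mem_univ p), Finset.card_univ, hX]
      omega
  -- ============ Step F : the Y-side bijection ============
  have hgb : ∀ y : Y, (if y ∈ Nb E p then dL y - 1 else 2*k-2 - dR y) < 2*k-2 := by
    intro y
    by_cases hyp : y ∈ Nb E p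
    · rw [if_pos hyp]
      have := hdL1 y hyp
      omega
    · rw [if_neg hyp]
      have hyq : y ∈ Nb E q := (hYcov y).resolve_left hyp
      have := hdR1 y hyq
      omega
  set g : Y → Fin (2*k-2) := fun y => ⟨if y ∈ Nb E p then dL y - 1 else 2*k-2 - dR y, hgb y⟩
    with hgdef
  have hginj : Function.Injective g := by
    intro y y' h
    have hv : (if y ∈ Nb E p then dL y - 1 else 2*k-2 - dR y)
        = (if y' ∈ Nb E p then dL y' - 1 else 2*k-2 - dR y') := congrArg Fin.val h
    by_cases hyp : y ∈ Nb E p <;> by_cases hyp' : y' ∈ Nb E p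
    · -- both on the p side
      rw [if_pos hyp, if_pos hyp'] at hv
      have hb := hdL1 y hyp
      have hb' := hdL1 y' hyp'
      have hdeq : dL y = dL y' := by omega
      obtain ⟨a, b, hab, hd⟩ := P2 y
      have hymem : y ∈ Nb E a \ Nb E b := by rw [hd]; rfl
      have hyLa : y ∈ L a := ⟨hymem.1, hyp⟩
      have hyLb : y ∉ L b := fun hc => hymem.2 hc.1
      have hy'La : y' ∈ L a := by
        rw [hdownL y' a]
        rw [hdownL y a] at hyLa
        omega
      have hy'Lb : y' ∉ L b := by
        rw [hdownL y' b]
        rw [hdownL y b] at hyLb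
        omega
      have : y' ∈ Nb E a \ Nb E b := ⟨hy'La.1, fun hc => hy'Lb ⟨hc, hyp'⟩⟩
      rw [hd] at this
      exact this.symm
    · exfalso
      rw [if_pos hyp, if_neg hyp'] at hv
      have hb := hdL1 y hyp
      have hb' := hdR1 y' ((hYcov y').resolve_left hyp')
      omega
    · exfalso
      rw [if_neg hyp, if_pos hyp'] at hv
      have hb := hdR1 y ((hYcov y).resolve_left hyp)
      have hb' := hdL1 y' hyp'
      omega
    · -- both on the q side
      rw [if_neg hyp, if_neg hyp'] at hv
      have hyq : y ∈ Nb E q := (hYcov y).resolve_left hyp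
      have hyq' : y' ∈ Nb E q := (hYcov y').resolve_left hyp'
      have hb := hdR1 y hyq
      have hb' := hdR1 y' hyq'
      have hdeq : dR y = dR y' := by omega
      obtain ⟨a, b, hab, hd⟩ := P2 y
      have hymem : y ∈ Nb E a \ Nb E b := by rw [hd]; rfl
      have hyRa : y ∈ R a := ⟨hymem.1, hyq⟩
      have hyRb : y ∉ R b := fun hc => hymem.2 hc.1
      have hy'Ra : y' ∈ R a := by
        rw [hupR y' a]
        rw [hupR y a] at hyRa
        omega
      have hy'Rb : y' ∉ R b := by
        rw [hupR y' b]
        rw [hupR y b] at hyRb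
        omega
      have : y' ∈ Nb E a \ Nb E b := ⟨hy'Ra.1, fun hc => hy'Rb ⟨hc, hyq'⟩⟩
      rw [hd] at this
      exact this.symm
  have hgsurj : Function.Surjective g := by
    intro j
    rcases lt_or_ge j.val (k-1) with hj | hj
    · -- p side : want y with dL y = j.val + 1
      obtain ⟨c, hc⟩ := hρsurj j.val (by omega)
      obtain ⟨d, hd⟩ := hρsurj (j.val + 1) (by omega)
      have hss : L d ⊂ L c := (hρlt c d).mp (by omega)
      obtain ⟨y, hyc, hyd⟩ := Set.exists_of_ssubset hss
      have hyp : y ∈ Nb E p := hLsub c hyc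
      have h1 : ρ c < dL y := (hdownL y c).mp hyc
      have h2 : ¬ (ρ d < dL y) := fun hcon => hyd ((hdownL y d).mpr hcon)
      refine ⟨y, ?_⟩
      apply Fin.ext
      show (if y ∈ Nb E p then dL y - 1 else 2*k-2 - dR y) = j.val
      rw [if_pos hyp]
      omega
    · -- q side : want y with dR y = 2*k-2 - j.val
      have hjlt := j.isLt
      set m := 2*k-2 - j.val with hmdef
      have hm1 : 1 ≤ m := by omega
      have hmk : m ≤ k - 1 := by omega
      obtain ⟨c, hc⟩ := hρsurj (k - m) (by omega)
      obtain ⟨d, hd⟩ := hρsurj (k - m - 1) (by omega)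
      have hss : R d ⊂ R c := (hρltR d c).mp (by omega)
      obtain ⟨y, hyc, hyd⟩ := Set.exists_of_ssubset hss
      have hyq : y ∈ Nb E q := hRsub c hyc
      have hynp : y ∉ Nb E p := fun hc' => hdpq y hc' hyq
      have h1 : k - dR y ≤ ρ c := (hupR y c).mp hyc
      have h2 : ¬ (k - dR y ≤ ρ d) := fun hcon => hyd ((hupR y d).mpr hcon)
      have hb := hdR1 y hyq
      refine ⟨y, ?_⟩
      apply Fin.ext
      show (if y ∈ Nb E p then dL y - 1 else 2*k-2 - dR y) = j.val
      rw [if_neg hynp]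
      omega
  refine ⟨Equiv.ofBijective f hfbij, Equiv.ofBijective g ⟨hginj, hgsurj⟩, ?_⟩
  intro x y
  show E x y ↔ Brel k (f x) (g y)
  unfold Brel
  show E x y ↔ (ρ x ≤ (g y).val ∧ (g y).val ≤ ρ x + (k-2))
  by_cases hyp : y ∈ Nb E p
  · have hgv : (g y).val = dL y - 1 := by
      show (if y ∈ Nb E p then dL y - 1 else 2*k-2 - dR y) = dL y - 1
      rw [if_pos hyp]
    have hb := hdL1 y hyp
    have hρb := hρbound x
    rw [hgv]
    constructor
    · intro hxy
      rcases (hsplit x y).mp hxy with h' | h'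
      · have := (hdownL y x).mp h'
        omega
      · exact absurd hyp (fun hc => hdpq y hc h'.2)
    · intro hcon
      apply (hsplit x y).mpr
      refine Or.inl ((hdownL y x).mpr ?_)
      omega
  · have hyq : y ∈ Nb E q := (hYcov y).resolve_left hyp
    have hgv : (g y).val = 2*k-2 - dR y := by
      show (if y ∈ Nb E p then dL y - 1 else 2*k-2 - dR y) = 2*k-2 - dR y
      rw [if_neg hyp]
    have hb := hdR1 y hyq
    have hρb := hρbound x
    rw [hgv]
    constructor
    · intro hxy
      rcases (hsplit x y).mp hxy with h' | h'
      · exact absurd h'.2 hyp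
      · have := (hupR y x).mp h'
        omega
    · intro hcon
      apply (hsplit x y).mpr
      refine Or.inr ((hupR y x).mpr ?_)
      omega

-- ============================================================
-- Backward direction
-- ============================================================
lemma back {X Y : Type*} [Fintype X] [Fintype Y] [DecidableEq X] [DecidableEq Y] (k : ℕ) (hk : 2 ≤ k) (E : X → Y → Prop)
    (f : X ≃ Fin k) (g : Y ≃ Fin (2*k-2)) (hE : ∀ x y, E x y ↔ Brel k (f x) (g y)) :
    ACBGraph E ∧ bipDilw E = k ∧
      (∀ v : X, bipDilw (fun (x : {a : X // a ≠ v}) (y : Y) => E x.val y) ≤ k - 1) ∧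
      (∀ v : Y, bipDilw (fun (x : X) (y : {b : Y // b ≠ v}) => E x y.val) ≤ k - 1) := by
  classical
  have hE' : ∀ x y, E x y ↔ ((f x).val ≤ (g y).val ∧ (g y).val ≤ (f x).val + (k-2)) := hE
  have hcardX : Fintype.card X = k := by rw [Fintype.card_congr f, Fintype.card_fin]
  have hcardY : Fintype.card Y = 2*k-2 := by rw [Fintype.card_congr g, Fintype.card_fin]
  -- ==== ACB ====
  have hACB : ACBGraph E := by
    refine ⟨?_, ?_, ?_⟩
    · rintro ⟨x, y, hx, hy, hadj⟩
      have key : ∀ i j : Fin 3, ((f (x i)).val ≤ (g (y j)).val ∧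
          (g (y j)).val ≤ (f (x i)).val + (k-2)) ↔ i = j :=
        fun i j => (hE' (x i) (y j)).symm.trans (hadj i j)
      have e0 := (key 0 0).mpr rfl
      have e1 := (key 1 1).mpr rfl
      have e2 := (key 2 2).mpr rfl
      have n01 : ¬ ((f (x 0)).val ≤ (g (y 1)).val ∧ (g (y 1)).val ≤ (f (x 0)).val + (k-2)) :=
        fun h => absurd ((key 0 1).mp h) (by decide)
      have n02 : ¬ ((f (x 0)).val ≤ (g (y 2)).val ∧ (g (y 2)).val ≤ (f (x 0)).val + (k-2)) :=
        fun h => absurd ((key 0 2).mp h) (by decide)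
      have n10 : ¬ ((f (x 1)).val ≤ (g (y 0)).val ∧ (g (y 0)).val ≤ (f (x 1)).val + (k-2)) :=
        fun h => absurd ((key 1 0).mp h) (by decide)
      have n12 : ¬ ((f (x 1)).val ≤ (g (y 2)).val ∧ (g (y 2)).val ≤ (f (x 1)).val + (k-2)) :=
        fun h => absurd ((key 1 2).mp h) (by decide)
      have n20 : ¬ ((f (x 2)).val ≤ (g (y 0)).val ∧ (g (y 0)).val ≤ (f (x 2)).val + (k-2)) :=
        fun h => absurd ((key 2 0).mp h) (by decide)
      have n21 : ¬ ((f (x 2)).val ≤ (g (y 1)).val ∧ (g (y 1)).val ≤ (f (x 2)).val + (k-2)) :=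
        fun h => absurd ((key 2 1).mp h) (by decide)
      have b0 := (f (x 0)).isLt
      have b1 := (f (x 1)).isLt
      have b2 := (f (x 2)).isLt
      omega
    · rintro ⟨x, y, hx, hy, hadj⟩
      have key : ∀ i j : Fin 3, ((f (x i)).val ≤ (g (y j)).val ∧
          (g (y j)).val ≤ (f (x i)).val + (k-2)) ↔ (j.val = i.val ∨ j.val = (i.val + 1) % 3) :=
        fun i j => (hE' (x i) (y j)).symm.trans (hadj i j)
      have e00 := (key 0 0).mpr (by decide)
      have e01 := (key 0 1).mpr (by decide)
      have e11 := (key 1 1).mpr (by decide)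
      have e12 := (key 1 2).mpr (by decide)
      have e22 := (key 2 2).mpr (by decide)
      have e20 := (key 2 0).mpr (by decide)
      have n02 : ¬ ((f (x 0)).val ≤ (g (y 2)).val ∧ (g (y 2)).val ≤ (f (x 0)).val + (k-2)) :=
        fun h => absurd ((key 0 2).mp h) (by decide)
      have n10 : ¬ ((f (x 1)).val ≤ (g (y 0)).val ∧ (g (y 0)).val ≤ (f (x 1)).val + (k-2)) :=
        fun h => absurd ((key 1 0).mp h) (by decide)
      have n21 : ¬ ((f (x 2)).val ≤ (g (y 1)).val ∧ (g (y 1)).val ≤ (f (x 2)).val + (k-2)) :=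
        fun h => absurd ((key 2 1).mp h) (by decide)
      have b0 := (f (x 0)).isLt
      have b1 := (f (x 1)).isLt
      have b2 := (f (x 2)).isLt
      omega
    · rintro ⟨x, y, hx, hy, hadj⟩
      have key : ∀ i j : Fin 4, ((f (x i)).val ≤ (g (y j)).val ∧
          (g (y j)).val ≤ (f (x i)).val + (k-2)) ↔ (j.val = i.val ∨ j.val = (i.val + 1) % 4) :=
        fun i j => (hE' (x i) (y j)).symm.trans (hadj i j)
      have e00 := (key 0 0).mpr (by decide)
      have e01 := (key 0 1).mpr (by decide)
      have e11 := (key 1 1).mpr (by decide)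
      have e12 := (key 1 2).mpr (by decide)
      have e22 := (key 2 2).mpr (by decide)
      have e23 := (key 2 3).mpr (by decide)
      have e33 := (key 3 3).mpr (by decide)
      have e30 := (key 3 0).mpr (by decide)
      have n02 : ¬ ((f (x 0)).val ≤ (g (y 2)).val ∧ (g (y 2)).val ≤ (f (x 0)).val + (k-2)) :=
        fun h => absurd ((key 0 2).mp h) (by decide)
      have n03 : ¬ ((f (x 0)).val ≤ (g (y 3)).val ∧ (g (y 3)).val ≤ (f (x 0)).val + (k-2)) :=
        fun h => absurd ((key 0 3).mp h) (by decide)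
      have n13 : ¬ ((f (x 1)).val ≤ (g (y 3)).val ∧ (g (y 3)).val ≤ (f (x 1)).val + (k-2)) :=
        fun h => absurd ((key 1 3).mp h) (by decide)
      have n10 : ¬ ((f (x 1)).val ≤ (g (y 0)).val ∧ (g (y 0)).val ≤ (f (x 1)).val + (k-2)) :=
        fun h => absurd ((key 1 0).mp h) (by decide)
      have n20 : ¬ ((f (x 2)).val ≤ (g (y 0)).val ∧ (g (y 0)).val ≤ (f (x 2)).val + (k-2)) :=
        fun h => absurd ((key 2 0).mp h) (by decide)
      have n21 : ¬ ((f (x 2)).val ≤ (g (y 1)).val ∧ (g (y 1)).val ≤ (f (x 2)).val + (k-2)) :=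
        fun h => absurd ((key 2 1).mp h) (by decide)
      have n31 : ¬ ((f (x 3)).val ≤ (g (y 1)).val ∧ (g (y 1)).val ≤ (f (x 3)).val + (k-2)) :=
        fun h => absurd ((key 3 1).mp h) (by decide)
      have n32 : ¬ ((f (x 3)).val ≤ (g (y 2)).val ∧ (g (y 2)).val ≤ (f (x 3)).val + (k-2)) :=
        fun h => absurd ((key 3 2).mp h) (by decide)
      have b0 := (f (x 0)).isLt
      have b1 := (f (x 1)).isLt
      have b2 := (f (x 2)).isLt
      have b3 := (f (x 3)).isLt
      omega
  -- ==== P1 / dilwX = k ====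
  have hP1 : ∀ a b : X, a ≠ b → ¬ Nb E a ⊆ Nb E b := by
    intro a b hab hsub
    rcases lt_trichotomy (f a).val (f b).val with h | h | h
    · have hbd : (f a).val < 2*k-2 := by have := (f a).isLt; omega
      set y := g.symm ⟨(f a).val, hbd⟩ with hydef
      have hgy : (g y).val = (f a).val := by rw [hydef, Equiv.apply_symm_apply]
      have hya : E a y := (hE' a y).mpr (by omega)
      have hyb : ¬ E b y := fun hcc => by have := (hE' b y).mp hcc; omega
      exact hyb (hsub hya)
    · exact hab (f.injective (Fin.ext h))
    · have hbd : (f a).val + (k-2) < 2*k-2 := by have := (f a).isLt; omega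
      set y := g.symm ⟨(f a).val + (k-2), hbd⟩ with hydef
      have hgy : (g y).val = (f a).val + (k-2) := by rw [hydef, Equiv.apply_symm_apply]
      have hya : E a y := (hE' a y).mpr (by omega)
      have hyb : ¬ E b y := fun hcc => by have := (hE' b y).mp hcc; omega
      exact hyb (hsub hya)
  have hanti_univ : XAntichain E Finset.univ := fun a _ b _ hab => hP1 a b hab
  have hdX : dilwX E = k := by
    apply le_antisymm
    · apply dilwX_le
      intro S _
      have := S.card_le_univ
      rwa [hcardX] at this
    · have := le_dilwX E hanti_univ
      rwa [Finset.card_univ, hcardX] at this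
  -- ==== Y antichains have ≤ 2 elements ====
  have hYpair : ∀ y y' : Y, (g y).val < (g y').val → ¬ NbY E y ⊆ NbY E y' →
      ¬ NbY E y' ⊆ NbY E y → ((g y).val ≤ k - 2 ∧ k - 1 ≤ (g y').val) := by
    intro y y' hlt h1 h2
    obtain ⟨x1, hx1, hx1'⟩ := Set.not_subset.mp h1
    obtain ⟨x2, hx2, hx2'⟩ := Set.not_subset.mp h2
    have e1 := (hE' x1 y).mp hx1
    have n1 : ¬ ((f x1).val ≤ (g y').val ∧ (g y').val ≤ (f x1).val + (k-2)) :=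
      fun hcc => hx1' ((hE' x1 y').mpr hcc)
    have e2 := (hE' x2 y').mp hx2
    have n2 : ¬ ((f x2).val ≤ (g y).val ∧ (g y).val ≤ (f x2).val + (k-2)) :=
      fun hcc => hx2' ((hE' x2 y).mpr hcc)
    have b1 := (f x1).isLt
    have b2 := (f x2).isLt
    omega
  have hYle2 : ∀ S : Finset Y, YAntichain E S → S.card ≤ 2 := by
    intro S hS
    by_contra hcon
    push_neg at hcon
    obtain ⟨a, b, c, ha, hb, hc, hab, hac, hbc⟩ := Finset.two_lt_card_iff.mp hcon
    have key : ∀ u v : Y, u ∈ S → v ∈ S → u ≠ v → (g u).val < (g v).val →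
        ((g u).val ≤ k-2 ∧ k-1 ≤ (g v).val) := by
      intro u v hu hv huv hlt
      exact hYpair u v hlt (hS (Finset.mem_coe.mpr hu) (Finset.mem_coe.mpr hv) huv)
        (hS (Finset.mem_coe.mpr hv) (Finset.mem_coe.mpr hu) huv.symm)
    have tri : ∀ u v w : Y, u ∈ S → v ∈ S → w ∈ S →
        (g u).val < (g v).val → (g v).val < (g w).val → False := by
      intro u v w hu hv hw h1 h2
      have k1 := key u v hu hv (fun he => by rw [he] at h1; omega) h1
      have k2 := key v w hv hw (fun he => by rw [he] at h2; omega) h2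
      omega
    have hvne : ∀ u v : Y, u ≠ v → (g u).val ≠ (g v).val := by
      intro u v huv he
      exact huv (g.injective (Fin.ext he))
    rcases lt_trichotomy (g a).val (g b).val with h1 | h1 | h1
    · rcases lt_trichotomy (g b).val (g c).val with h2 | h2 | h2
      · exact tri a b c ha hb hc h1 h2
      · exact hvne b c hbc h2
      · rcases lt_trichotomy (g a).val (g c).val with h3 | h3 | h3
        · exact tri a c b ha hc hb h3 h2
        · exact hvne a c hac h3
        · exact tri c a b hc ha hb h3 h1
    · exact hvne a b hab h1
    · rcases lt_trichotomy (g a).val (g c).val with h2 | h2 | h2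
      · exact tri b a c hb ha hc h1 h2
      · exact hvne a c hac h2
      · rcases lt_trichotomy (g b).val (g c).val with h3 | h3 | h3
        · exact tri b c a hb hc ha h3 h2
        · exact hvne b c hbc h3
        · exact tri c b a hc hb ha h3 h1
  have hbip : bipDilw E = k := by
    have h1 : dilwY E ≤ 2 := dilwY_le E hYle2
    show max (dilwX E) (dilwY E) = k
    rw [hdX]
    exact max_eq_left (by omega)
  -- ==== criticality for X vertices ====
  have hcritX : ∀ v : X, bipDilw (fun (x : {a : X // a ≠ v}) (y : Y) => E x.val y) ≤ k - 1 := by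
    intro v
    have hS1 : ∀ S : Finset {a : X // a ≠ v}, S.card ≤ k - 1 := by
      intro S
      have h1 : S.image Subtype.val ⊆ Finset.univ.erase v := by
        intro z hz
        obtain ⟨⟨z', hz'⟩, _, rfl⟩ := Finset.mem_image.mp hz
        exact Finset.mem_erase.mpr ⟨hz', Finset.mem_univ _⟩
      have h2 := Finset.card_le_card h1
      rw [Finset.card_image_of_injective _ Subtype.val_injective,
        Finset.card_erase_of_mem (Finset.mem_univ v), Finset.card_univ, hcardX] at h2
      exact h2
    have hdX1 : dilwX (fun (x : {a : X // a ≠ v}) (y : Y) => E x.val y) ≤ k - 1 :=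
      dilwX_le _ (fun S _ => hS1 S)
    have hdY1 : dilwY (fun (x : {a : X // a ≠ v}) (y : Y) => E x.val y) ≤ k - 1 := by
      by_cases hk3 : 3 ≤ k
      · apply dilwY_le
        intro S hS
        have hSE : YAntichain E S := by
          intro a ha b hb hab hsub
          apply hS ha hb hab
          intro x' hx'
          exact hsub hx'
        have := hYle2 S hSE
        omega
      · have hk2 : k = 2 := by omega
        apply dilwY_le
        intro S hS
        have hsing : Subsingleton {a : X // a ≠ v} := by
          apply Fintype.card_le_one_iff_subsingleton.mp
          have := hS1 Finset.univ
          rw [Finset.card_univ] at this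
          omega
        have h1 : S.card ≤ 1 := by
          rw [Finset.card_le_one]
          intro a ha b hb
          by_contra hne
          have hp1 := hS (Finset.mem_coe.mpr ha) (Finset.mem_coe.mpr hb) hne
          have hp2 := hS (Finset.mem_coe.mpr hb) (Finset.mem_coe.mpr ha) (Ne.symm hne)
          obtain ⟨x2, hx2, hx2'⟩ := Set.not_subset.mp hp2
          apply hp1
          intro x hx
          have hxe : x = x2 := Subsingleton.elim x x2
          rw [hxe] at hx
          exact absurd hx hx2'
        omega
    exact max_le hdX1 hdY1
  -- ==== criticality for Y vertices ====
  have hcritY : ∀ v : Y, bipDilw (fun (x : X) (y : {b : Y // b ≠ v}) => E x y.val) ≤ k - 1 := by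
    intro v
    have hYS : ∀ S : Finset {b : Y // b ≠ v}, S.card ≤ 2*k-3 := by
      intro S
      have h1 : S.image Subtype.val ⊆ Finset.univ.erase v := by
        intro z hz
        obtain ⟨⟨z', hz'⟩, _, rfl⟩ := Finset.mem_image.mp hz
        exact Finset.mem_erase.mpr ⟨hz', Finset.mem_univ _⟩
      have h2 := Finset.card_le_card h1
      rw [Finset.card_image_of_injective _ Subtype.val_injective,
        Finset.card_erase_of_mem (Finset.mem_univ v), Finset.card_univ, hcardY] at h2
      omega
    have hdY2 : dilwY (fun (x : X) (y : {b : Y // b ≠ v}) => E x y.val) ≤ k - 1 := by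
      by_cases hk3 : 3 ≤ k
      · apply dilwY_le
        intro S hS
        have hS' : YAntichain E (S.image Subtype.val) := by
          intro a ha b hb hab
          obtain ⟨a', ha', rfl⟩ := Finset.mem_image.mp (Finset.mem_coe.mp ha)
          obtain ⟨b', hb', rfl⟩ := Finset.mem_image.mp (Finset.mem_coe.mp hb)
          have hne : a' ≠ b' := fun he => hab (congrArg Subtype.val he)
          exact hS (Finset.mem_coe.mpr ha') (Finset.mem_coe.mpr hb') hne
        have h2 := hYle2 _ hS'
        rw [Finset.card_image_of_injective _ Subtype.val_injective] at h2
        omega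
      · apply dilwY_le
        intro S hS
        have := hYS S
        omega
    have hdX2 : dilwX (fun (x : X) (y : {b : Y // b ≠ v}) => E x y.val) ≤ k - 1 := by
      have hjlt : (g v).val < 2*k-2 := (g v).isLt
      obtain ⟨ia, ib, hne, hsub⟩ : ∃ ia ib : Fin k, ia ≠ ib ∧
          (∀ y' : {b : Y // b ≠ v}, E (f.symm ia) y'.val → E (f.symm ib) y'.val) := by
        have hgyne : ∀ y' : {b : Y // b ≠ v}, (g y'.val).val ≠ (g v).val := by
          intro y' he
          exact y'.2 (g.injective (Fin.ext he))
        by_cases hcase : (g v).val ≤ k - 2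
        · refine ⟨⟨(g v).val, by omega⟩, ⟨(g v).val + 1, by omega⟩,
            Fin.ne_of_val_ne (by show (g v).val ≠ (g v).val + 1; omega), ?_⟩
          intro y' hy'
          have h1 : (g v).val ≤ (g y'.val).val ∧ (g y'.val).val ≤ (g v).val + (k-2) := by
            have := (hE' _ _).mp hy'
            rwa [Equiv.apply_symm_apply] at this
          have h2 := hgyne y'
          apply (hE' _ _).mpr
          rw [Equiv.apply_symm_apply]
          show (g v).val + 1 ≤ (g y'.val).val ∧ (g y'.val).val ≤ ((g v).val + 1) + (k-2)
          omega
        · refine ⟨⟨(g v).val - (k-2), by omega⟩, ⟨(g v).val - (k-1), by omega⟩,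
            Fin.ne_of_val_ne (by show (g v).val - (k-2) ≠ (g v).val - (k-1); omega), ?_⟩
          intro y' hy'
          have h1 : (g v).val - (k-2) ≤ (g y'.val).val ∧
              (g y'.val).val ≤ ((g v).val - (k-2)) + (k-2) := by
            have := (hE' _ _).mp hy'
            rwa [Equiv.apply_symm_apply] at this
          have h2 := hgyne y'
          apply (hE' _ _).mpr
          rw [Equiv.apply_symm_apply]
          show (g v).val - (k-1) ≤ (g y'.val).val ∧ (g y'.val).val ≤ ((g v).val - (k-1)) + (k-2)
          omega
      apply dilwX_le
      intro S hS
      by_contra hcon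
      push_neg at hcon
      have hck : S.card = k := by
        have := S.card_le_univ
        rw [hcardX] at this
        omega
      have hSu : S = Finset.univ := Finset.eq_univ_of_card _ (by rw [hck, hcardX])
      have hmem : ∀ x : X, x ∈ S := fun x => hSu ▸ Finset.mem_univ x
      have hne' : f.symm ia ≠ f.symm ib := fun he => hne (f.symm.injective he)
      exact hS (Finset.mem_coe.mpr (hmem _)) (Finset.mem_coe.mpr (hmem _)) hne'
        (fun y' hy' => hsub y' hy')
    exact max_le hdX2 hdY2
  exact ⟨hACB, hbip, hcritX, hcritY⟩

-- ============================================================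
-- Forward direction (X side pipeline)
-- ============================================================
lemma forwardX {X Y : Type*} [Fintype X] [Fintype Y] [DecidableEq X] [DecidableEq Y] (k : ℕ) (hk : 2 ≤ k) (E : X → Y → Prop)
    (hACB : ACBGraph E) (hdX : dilwX E = k)
    (hcX : ∀ v : X, bipDilw (fun (x : {a : X // a ≠ v}) (y : Y) => E x.val y) ≤ k - 1)
    (hcY : ∀ v : Y, bipDilw (fun (x : X) (y : {b : Y // b ≠ v}) => E x y.val) ≤ k - 1) :
    ∃ (f : X ≃ Fin k) (g : Y ≃ Fin (2*k-2)), ∀ x y, E x y ↔ Brel k (f x) (g y) := by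
  classical
  -- a maximum antichain
  have hset : dilwX E ∈ {n | ∃ S : Finset X, XAntichain E S ∧ S.card = n} := by
    apply Nat.sSup_mem
    · exact ⟨0, ∅, xantichain_empty E, Finset.card_empty⟩
    · refine ⟨Fintype.card X, ?_⟩
      rintro n ⟨T, _, rfl⟩
      exact T.card_le_univ.trans (le_of_eq (Finset.card_univ))
  rw [hdX] at hset
  obtain ⟨S, hS, hSk⟩ := hset
  -- S is all of X
  have hSu : S = Finset.univ := by
    rw [Finset.eq_univ_iff_forall]
    by_contra hcon
    push_neg at hcon
    obtain ⟨v, hv⟩ := hcon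
    have hS' : XAntichain (fun (x : {a : X // a ≠ v}) (y : Y) => E x.val y)
        (S.subtype (fun a => a ≠ v)) := by
      intro a ha b hb hab
      have ha' : a.val ∈ S := Finset.mem_subtype.mp (Finset.mem_coe.mp ha)
      have hb' : b.val ∈ S := Finset.mem_subtype.mp (Finset.mem_coe.mp hb)
      have hne : a.val ≠ b.val := fun he => hab (Subtype.ext he)
      exact hS (Finset.mem_coe.mpr ha') (Finset.mem_coe.mpr hb') hne
    have hcard : (S.subtype (fun a => a ≠ v)).card = k := by
      rw [Finset.card_subtype]
      have hfe : S.filter (fun a => a ≠ v) = S := by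
        apply Finset.filter_true_of_mem
        intro a ha he
        exact hv (he ▸ ha)
      rw [hfe, hSk]
    have h1 := le_dilwX _ hS'
    rw [hcard] at h1
    have h2 := hcX v
    have h3 : dilwX (fun (x : {a : X // a ≠ v}) (y : Y) => E x.val y) ≤
        bipDilw (fun (x : {a : X // a ≠ v}) (y : Y) => E x.val y) := le_max_left _ _
    omega
  have hcardX : Fintype.card X = k := by
    rw [← Finset.card_univ, ← hSu, hSk]
  have hP1 : ∀ a b : X, a ≠ b → ¬ Nb E a ⊆ Nb E b := by
    intro a b hab
    exact hS (by rw [hSu]; exact Finset.mem_coe.mpr (Finset.mem_univ a))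
      (by rw [hSu]; exact Finset.mem_coe.mpr (Finset.mem_univ b)) hab
  have hP2 : ∀ y : Y, ∃ a b : X, a ≠ b ∧ Nb E a \ Nb E b = {y} := by
    intro v
    have hnot : ¬ XAntichain (fun (x : X) (y' : {b : Y // b ≠ v}) => E x y'.val)
        Finset.univ := by
      intro hA
      have h1 := le_dilwX _ hA
      rw [Finset.card_univ, hcardX] at h1
      have h2 := hcY v
      have h3 : dilwX (fun (x : X) (y' : {b : Y // b ≠ v}) => E x y'.val) ≤
          bipDilw (fun (x : X) (y' : {b : Y // b ≠ v}) => E x y'.val) := le_max_left _ _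
      omega
    simp only [XAntichain, Set.Pairwise] at hnot
    push_neg at hnot
    obtain ⟨a, _, b, _, hab, hsub⟩ := hnot
    refine ⟨a, b, hab, ?_⟩
    have hsub1 : Nb E a \ Nb E b ⊆ {v} := by
      rintro z ⟨hza, hzb⟩
      by_contra hzv
      rw [Set.mem_singleton_iff] at hzv
      have hmem : (⟨z, hzv⟩ : {b : Y // b ≠ v}) ∈
          Nb (fun (x : X) (y' : {b : Y // b ≠ v}) => E x y'.val) a := hza
      exact hzb (hsub hmem)
    obtain ⟨w, hw1, hw2⟩ := Set.not_subset.mp (hP1 a b hab)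
    have hwv : w = v := Set.mem_singleton_iff.mp (hsub1 ⟨hw1, hw2⟩)
    apply Set.Subset.antisymm hsub1
    intro z hz
    rw [Set.mem_singleton_iff] at hz
    rw [hz, ← hwv]
    exact ⟨hw1, hw2⟩
  exact core_s17 k hk E hcardX hP1 hP2 (no3K2_s17 hACB.1) (noC6 hACB.2.1) (noC8 hACB.2.2)

/-- a bipartite graph is a k-critical ACB graph iff it is isomorphic to B_k. -/
theorem stmt17 (k : ℕ) (hk : 2 ≤ k) {X Y : Type*} [Fintype X] [Fintype Y] [DecidableEq X] [DecidableEq Y]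
    (E : X → Y → Prop) :
    (ACBGraph E ∧ bipDilw E = k ∧
      (∀ v : X, bipDilw (fun (x : {a : X // a ≠ v}) (y : Y) => E x.val y) ≤ k - 1) ∧
      (∀ v : Y, bipDilw (fun (x : X) (y : {b : Y // b ≠ v}) => E x y.val) ≤ k - 1)) ↔
    ((∃ (f : X ≃ Fin k) (g : Y ≃ Fin (2*k-2)), ∀ x y, E x y ↔ Brel k (f x) (g y)) ∨
      (∃ (f : Y ≃ Fin k) (g : X ≃ Fin (2*k-2)), ∀ x y, E x y ↔ Brel k (f y) (g x))) := by
  constructor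
  · rintro ⟨hACB, hdilw, hcX, hcY⟩
    have hmax : max (dilwX E) (dilwY E) = k := hdilw
    rcases max_choice (dilwX E) (dilwY E) with hmc | hmc
    · left
      exact forwardX k hk E hACB (by rw [← hmc, hmax]) hcX hcY
    · right
      have hdY : dilwX (fun (y : Y) (x : X) => E x y) = k := by
        rw [dilwX_flip, ← hmc, hmax]
      have hACB' : ACBGraph (fun (y : Y) (x : X) => E x y) := acb_flip hACB
      have hcX' : ∀ v : Y, bipDilw (fun (y : {b : Y // b ≠ v}) (x : X) => E x y.val) ≤ k - 1 := by
        intro v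
        have h1 := hcY v
        have h2 : bipDilw (fun (y : {b : Y // b ≠ v}) (x : X) => E x y.val)
            = bipDilw (fun (x : X) (y : {b : Y // b ≠ v}) => E x y.val) :=
          bipDilw_flip _
        omega
      have hcY' : ∀ v : X, bipDilw (fun (y : Y) (x : {a : X // a ≠ v}) => E x.val y) ≤ k - 1 := by
        intro v
        have h1 := hcX v
        have h2 : bipDilw (fun (y : Y) (x : {a : X // a ≠ v}) => E x.val y)
            = bipDilw (fun (x : {a : X // a ≠ v}) (y : Y) => E x.val y) :=
          bipDilw_flip _
        omega
      obtain ⟨f, g, hfg⟩ := forwardX k hk (fun (y : Y) (x : X) => E x y) hACB' hdY hcX' hcY'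
      exact ⟨f, g, fun x y => hfg y x⟩
  · rintro (⟨f, g, hfg⟩ | ⟨f, g, hfg⟩)
    · exact back k hk E f g hfg
    · have hb := back k hk (fun (y : Y) (x : X) => E x y) f g (fun y x => hfg x y)
      obtain ⟨hACB', hdilw', hcX', hcY'⟩ := hb
      refine ⟨?_, ?_, ?_, ?_⟩
      · obtain ⟨h1, h2, h3⟩ := hACB'
        exact ⟨fun hh => h1 (has3K2_flip hh), fun hh => h2 (hasCycle3_flip hh),
          fun hh => h3 (hasCycle4_flip hh)⟩
      · rw [← bipDilw_flip E]
        exact hdilw'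
      · intro v
        have h1 : bipDilw (fun (y : Y) (x : {a : X // a ≠ v}) => E x.val y) ≤ k - 1 := hcY' v
        have h2 : bipDilw (fun (y : Y) (x : {a : X // a ≠ v}) => E x.val y)
            = bipDilw (fun (x : {a : X // a ≠ v}) (y : Y) => E x.val y) :=
          bipDilw_flip _
        omega
      · intro v
        have h1 : bipDilw (fun (y : {b : Y // b ≠ v}) (x : X) => E x y.val) ≤ k - 1 := hcX' v
        have h2 : bipDilw (fun (y : {b : Y // b ≠ v}) (x : X) => E x y.val)
            = bipDilw (fun (x : X) (y : {b : Y // b ≠ v}) => E x y.val) :=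
          bipDilw_flip _
        omega
end ACB
end
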